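/- arXiv:2411.19432 — 5 statements merged into one kernel-verified Lean document; each statement's English description precedes it below -/
import Mathlib

section
/- Let H be an r-uniform hypergraph with maximum degree D and maximal density m(H) ≤ a/b, where a, b are positive integers with b > r−1 and a > b/(r−1). Then there exist graphs H₁, …, H_a on the vertex set V(H) such that: (D1) every connected component of each H_i contains at most one cycle (equivalently, each component has at most as many edges as vertices) and each H_i has maximum degree at most 2D; and (D2) for each hyperedge h of H there exist forests F₁^{(h)} ⊆ H₁, …, F_a^{(h)} ⊆ H_a, each a subgraph with all edges contained in the r-element vertex set h, such that the total number of edges Σ_{i=1}^{a} e(F_i^{(h)}) equals b. -/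
set_option linter.unusedSectionVars false
set_option linter.unusedVariables false
set_option maxHeartbeats 1000000

namespace HypDecomp


variable {V : Type} [Fintype V] [DecidableEq V]

abbrev Unt (V : Type) (a : ℕ) := Finset V × V × Fin a

def cnt (a : ℕ) (P : Finset (Unt V a)) (h : Finset V) : ℕ := (P.filter (fun u => u.1 = h)).card

def cntc (a : ℕ) (P : Finset (Unt V a)) (h : Finset V) (i : Fin a) : ℕ :=
  (P.filter (fun u => u.1 = h ∧ u.2.2 = i)).card

def Valid (a b r : ℕ) (H : Finset (Finset V)) (P : Finset (Unt V a)) : Prop :=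
  (∀ u ∈ P, u.1 ∈ H ∧ u.2.1 ∈ u.1) ∧
  (∀ u ∈ P, ∀ u' ∈ P, u.2 = u'.2 → u = u') ∧
  (∀ h : Finset V, cnt a P h ≤ b) ∧
  (∀ (h : Finset V) (i : Fin a), cntc a P h i ≤ r - 1)

section Counts

variable {a b r : ℕ} {H : Finset (Finset V)} {h₀ : Finset V}
variable {P : Finset (Unt V a)} {h : Finset V} {q z : V × Fin a}

lemma mem_ie {g : Finset V} {p : V × Fin a} (hmem : (g, p) ∈ P) (hne : (g, p) ≠ (h, q)) :
    (g, p) ∈ insert (h, z) (P.erase (h, q)) :=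
  Finset.mem_insert_of_mem (Finset.mem_erase.2 ⟨hne, hmem⟩)

lemma cnt_ie (hq : (h, q) ∈ P) (hzP : ∀ u ∈ P, u.2 ≠ z) (g : Finset V) :
    cnt a (insert (h, z) (P.erase (h, q))) g = cnt a P g := by
  unfold cnt
  rw [Finset.filter_insert, Finset.filter_erase]
  by_cases hg : h = g
  · rw [if_pos hg]
    have hqf : (h, q) ∈ P.filter (fun u => u.1 = g) := Finset.mem_filter.2 ⟨hq, hg⟩
    have hzf : (h, z) ∉ (P.filter (fun u => u.1 = g)).erase (h, q) := by
      intro hc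
      exact hzP (h, z) (Finset.mem_of_mem_filter _ (Finset.mem_of_mem_erase hc)) rfl
    rw [Finset.card_insert_of_notMem hzf, Finset.card_erase_of_mem hqf]
    have : 0 < (P.filter (fun u => u.1 = g)).card := Finset.card_pos.2 ⟨_, hqf⟩
    omega
  · rw [if_neg hg]
    rw [Finset.erase_eq_of_notMem]
    intro hc
    exact hg (Finset.mem_filter.1 hc).2

lemma cntc_ie_le (hq : (h, q) ∈ P) (hzP : ∀ u ∈ P, u.2 ≠ z) {g : Finset V} {j : Fin a}
    (hne : ¬(g = h ∧ j = z.2)) :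
    cntc a (insert (h, z) (P.erase (h, q))) g j ≤ cntc a P g j := by
  unfold cntc
  rw [Finset.filter_insert, Finset.filter_erase]
  rw [if_neg (by rintro ⟨h1, h2⟩; exact hne ⟨h1.symm, h2.symm⟩)]
  exact Finset.card_erase_le

lemma cntc_ie_main (hq : (h, q) ∈ P) (hzP : ∀ u ∈ P, u.2 ≠ z)
    (hcap : cntc a P h z.2 < r - 1 ∨ z.2 = q.2) (hval : cntc a P h z.2 ≤ r - 1) :
    cntc a (insert (h, z) (P.erase (h, q))) h z.2 ≤ r - 1 := by
  unfold cntc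
  rw [Finset.filter_insert, Finset.filter_erase, if_pos ⟨rfl, rfl⟩]
  rcases hcap with hlt | heq
  · calc _ ≤ ((P.filter (fun u => u.1 = h ∧ u.2.2 = z.2)).erase (h, q)).card + 1 :=
        Finset.card_insert_le _ _
    _ ≤ (P.filter (fun u => u.1 = h ∧ u.2.2 = z.2)).card + 1 :=
        Nat.add_le_add_right Finset.card_erase_le _
    _ ≤ r - 1 := by unfold cntc at hlt; omega
  · have hqf : (h, q) ∈ P.filter (fun u => u.1 = h ∧ u.2.2 = z.2) :=
      Finset.mem_filter.2 ⟨hq, rfl, heq.symm⟩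
    have hzf : (h, z) ∉ (P.filter (fun u => u.1 = h ∧ u.2.2 = z.2)).erase (h, q) := by
      intro hc
      exact hzP (h, z) (Finset.mem_of_mem_filter _ (Finset.mem_of_mem_erase hc)) rfl
    rw [Finset.card_insert_of_notMem hzf, Finset.card_erase_of_mem hqf]
    have : 0 < (P.filter (fun u => u.1 = h ∧ u.2.2 = z.2)).card := Finset.card_pos.2 ⟨_, hqf⟩
    unfold cntc at hval; omega

lemma card_ie (hq : (h, q) ∈ P) (hzP : ∀ u ∈ P, u.2 ≠ z) :
    (insert (h, z) (P.erase (h, q))).card = P.card := by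
  have hzf : (h, z) ∉ P.erase (h, q) := by
    intro hc; exact hzP (h, z) (Finset.mem_of_mem_erase hc) rfl
  rw [Finset.card_insert_of_notMem hzf, Finset.card_erase_of_mem hq]
  have : 0 < P.card := Finset.card_pos.2 ⟨_, hq⟩
  omega

lemma cnt_insert (hzP : ∀ u ∈ P, u.2 ≠ z) (g : Finset V) :
    cnt a (insert (h, z) P) g = cnt a P g + (if g = h then 1 else 0) := by
  unfold cnt
  rw [Finset.filter_insert]
  by_cases hg : h = g
  · rw [if_pos hg, if_pos hg.symm,
      Finset.card_insert_of_notMem (fun hc => hzP _ (Finset.mem_of_mem_filter _ hc) rfl)]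
  · rw [if_neg hg, if_neg (fun hc => hg hc.symm)]
    omega

lemma cntc_insert (hzP : ∀ u ∈ P, u.2 ≠ z) (g : Finset V) (j : Fin a) :
    cntc a (insert (h, z) P) g j = cntc a P g j + (if g = h ∧ j = z.2 then 1 else 0) := by
  unfold cntc
  rw [Finset.filter_insert]
  by_cases hg : h = g ∧ z.2 = j
  · rw [if_pos hg, if_pos ⟨hg.1.symm, hg.2.symm⟩,
      Finset.card_insert_of_notMem (fun hc => hzP _ (Finset.mem_of_mem_filter _ hc) rfl)]
  · rw [if_neg hg, if_neg (fun hc => hg ⟨hc.1.symm, hc.2.symm⟩)]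
    omega

end Counts

section AugSec

variable {a b r : ℕ} {H : Finset (Finset V)} {h₀ : Finset V}

inductive Aug (a r : ℕ) (h₀ : Finset V) (P : Finset (Unt V a)) :
    List ((Finset V × Fin a) × V × Fin a) → Prop
  | base (i : Fin a) (z : V × Fin a) (hz : z.1 ∈ h₀) (hzi : z.2 = i)
      (hc : cntc a P h₀ i < r - 1) : Aug a r h₀ P [((h₀, i), z)]
  | step (h : Finset V) (i : Fin a) (z : V × Fin a) (m' : Finset V × Fin a)
      (q : V × Fin a) (L : List ((Finset V × Fin a) × V × Fin a))
      (hW : Aug a r h₀ P ((m', q) :: L))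
      (hq : (h, q) ∈ P)
      (hz : z.1 ∈ h) (hzi : z.2 = i)
      (hcap : cntc a P h i < r - 1 ∨ i = q.2)
      (hm : (h, i) ∉ ((m', q) :: L).map Prod.fst)
      (hgz : z ∉ ((m', q) :: L).map Prod.snd) :
      Aug a r h₀ P (((h, i), z) :: (m', q) :: L)

lemma aug_transfer {P : Finset (Unt V a)} {h : Finset V} {i : Fin a} {q z : V × Fin a}
    (hq : (h, q) ∈ P) (hzP : ∀ u ∈ P, u.2 ≠ z) (hzi : z.2 = i)
    {L : List ((Finset V × Fin a) × V × Fin a)} (hA : Aug a r h₀ P L) :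
    ((h, i) ∉ L.map Prod.fst) → (z ∉ L.map Prod.snd) → (q ∉ L.tail.map Prod.snd) →
    Aug a r h₀ (insert (h, z) (P.erase (h, q))) L := by
  induction hA with
  | base i' z' hz' hzi' hc' =>
    intro hm _ _
    refine Aug.base i' z' hz' hzi' ?_
    have hne : ¬(h₀ = h ∧ i' = z.2) := by
      rintro ⟨h1, h2⟩
      exact hm (by
        simp only [List.map_cons, List.map_nil, List.mem_singleton]
        exact Prod.ext h1.symm (h2.trans hzi).symm)
    exact lt_of_le_of_lt (cntc_ie_le hq hzP hne) hc'
  | step g j z' m' q' L' hW hq' hz' hzi' hcap' hm' hgz' ih =>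
    intro hm hz2 hq2
    simp only [List.map_cons, List.mem_cons, not_or, List.tail_cons] at hm hz2 hq2
    have hqq' : q ≠ q' := hq2.1
    refine Aug.step g j z' m' q' L' ?_ ?_ hz' hzi' ?_ hm' hgz'
    · refine ih ?_ ?_ ?_
      · simp only [List.map_cons, List.mem_cons, not_or]
        exact hm.2
      · simp only [List.map_cons, List.mem_cons, not_or]
        exact hz2.2
      · simp only [List.tail_cons]
        exact hq2.2
    · refine mem_ie hq' ?_
      intro hc
      exact hqq' ((Prod.ext_iff.1 hc).2).symm
    · rcases hcap' with hlt | heq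
      · left
        have hne : ¬(g = h ∧ j = z.2) := by
          rintro ⟨h1, h2⟩
          exact hm.1 (Prod.ext h1.symm (h2.trans hzi).symm)
        exact lt_of_le_of_lt (cntc_ie_le hq hzP hne) hlt
      · right; exact heq

lemma aug_head_not_gained {P : Finset (Unt V a)} {m : Finset V × Fin a} {p : V × Fin a}
    {L : List ((Finset V × Fin a) × V × Fin a)}
    (hA : Aug a r h₀ P ((m, p) :: L)) : p ∉ L.map Prod.snd := by
  cases hA with
  | base i z hz hzi hc => simp
  | step h i z m' q L' hW hq hz hzi hcap hm hgz =>
    simp only [List.map_cons, List.mem_cons, not_or] at hgz ⊢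
    exact hgz

lemma aug_augment (hh₀ : h₀ ∈ H) :
    ∀ (L : List ((Finset V × Fin a) × V × Fin a)) (m : Finset V × Fin a) (z : V × Fin a)
      (P : Finset (Unt V a)), Valid a b r H P → Aug a r h₀ P ((m, z) :: L) →
      cnt a P h₀ < b → (∀ u ∈ P, u.2 ≠ z) →
      ∃ Q, Valid a b r H Q ∧ Q.card = P.card + 1 := by
  intro L
  induction L with
  | nil =>
    intro m z P hV hA hdef hzP
    cases hA with
    | base i _ hz hzi hc =>
      refine ⟨insert (h₀, z) P, ⟨?_, ?_, ?_, ?_⟩, ?_⟩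
      · intro u hu
        rcases Finset.mem_insert.1 hu with h1 | h1
        · subst h1; exact ⟨hh₀, hz⟩
        · exact hV.1 u h1
      · intro u hu u' hu' he
        rcases Finset.mem_insert.1 hu with h1 | h1 <;>
          rcases Finset.mem_insert.1 hu' with h2 | h2
        · rw [h1, h2]
        · exact (hzP u' h2 (by rw [← he, h1])).elim
        · exact (hzP u h1 (by rw [he, h2])).elim
        · exact hV.2.1 u h1 u' h2 he
      · intro g
        rw [cnt_insert hzP g]
        by_cases hg : g = h₀
        · rw [if_pos hg, hg]
          have := hdef; omega
        · rw [if_neg hg]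
          have := hV.2.2.1 g; omega
      · intro g j
        rw [cntc_insert hzP g j]
        by_cases hg : g = h₀ ∧ j = z.2
        · rw [if_pos hg, hg.1, hg.2, hzi]
          have := hc; omega
        · rw [if_neg hg]
          have := hV.2.2.2 g j; omega
      · exact Finset.card_insert_of_notMem (fun hc => hzP _ hc rfl)
  | cons x L' ihL =>
    intro m z P hV hA hdef hzP
    rcases x with ⟨m', q⟩
    cases hA with
    | step h i _ _ _ _ hW hq hz hzi hcap hm hgz =>
      set P₁ := insert (h, z) (P.erase (h, q)) with hP₁
      have hqtail : q ∉ L'.map Prod.snd := aug_head_not_gained hW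
      have hzq : z ≠ q := by
        intro hc; exact hzP (h, q) hq hc.symm
      have hV₁ : Valid a b r H P₁ := by
        refine ⟨?_, ?_, ?_, ?_⟩
        · intro u hu
          rcases Finset.mem_insert.1 hu with h1 | h1
          · subst h1; exact ⟨(hV.1 _ hq).1, hz⟩
          · exact hV.1 u (Finset.mem_of_mem_erase h1)
        · intro u hu u' hu' he
          rcases Finset.mem_insert.1 hu with h1 | h1 <;>
            rcases Finset.mem_insert.1 hu' with h2 | h2
          · rw [h1, h2]
          · exact (hzP u' (Finset.mem_of_mem_erase h2) (by rw [← he, h1])).elim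
          · exact (hzP u (Finset.mem_of_mem_erase h1) (by rw [he, h2])).elim
          · exact hV.2.1 u (Finset.mem_of_mem_erase h1) u' (Finset.mem_of_mem_erase h2) he
        · intro g; rw [cnt_ie hq hzP g]; exact hV.2.2.1 g
        · intro g j
          by_cases hg : g = h ∧ j = z.2
          · rw [hg.1, hg.2]
            refine cntc_ie_main hq hzP ?_ (hV.2.2.2 h z.2)
            rcases hcap with h1 | h1
            · left; rwa [hzi]
            · right; rw [hzi]; exact h1
          · exact le_trans (cntc_ie_le hq hzP hg) (hV.2.2.2 g j)
      have hA₁ : Aug a r h₀ P₁ ((m', q) :: L') := by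
        refine aug_transfer hq hzP hzi hW ?_ ?_ ?_
        · exact hm
        · exact hgz
        · simpa using hqtail
      have hdef₁ : cnt a P₁ h₀ < b := by rw [cnt_ie hq hzP]; exact hdef
      have hqP₁ : ∀ u ∈ P₁, u.2 ≠ q := by
        intro u hu
        rcases Finset.mem_insert.1 hu with h1 | h1
        · subst h1; exact hzq
        · intro hc
          have hu' : u ∈ P := Finset.mem_of_mem_erase h1
          have : u = (h, q) := hV.2.1 u hu' (h, q) hq (by rw [hc])
          exact (Finset.mem_erase.1 h1).1 this
      obtain ⟨Q, hQ, hcard⟩ := ihL m' q P₁ hV₁ hA₁ hdef₁ hqP₁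
      exact ⟨Q, hQ, by rw [hcard, card_ie hq hzP]⟩

end AugSec

section Closure

variable {a b r : ℕ} {H : Finset (Finset V)} {h₀ : Finset V}

def RP (a r : ℕ) (h₀ : Finset V) (P : Finset (Unt V a)) (p : V × Fin a) : Prop :=
  ∃ m L, Aug a r h₀ P ((m, p) :: L)

lemma rp_suffix {P : Finset (Unt V a)} {L : List ((Finset V × Fin a) × V × Fin a)}
    (hA : Aug a r h₀ P L) : ∀ {z}, z ∈ L.map Prod.snd → RP a r h₀ P z := by
  induction hA with
  | base i z' hz hzi hc =>
    intro z hm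
    simp only [List.map_cons, List.map_nil, List.mem_singleton] at hm
    subst hm
    exact ⟨_, _, Aug.base i z hz hzi hc⟩
  | step h i z' m' q L' hW hq hz hzi hcap hm hgz ih =>
    intro z hm
    simp only [List.map_cons, List.mem_cons] at hm
    rcases hm with h1 | h1
    · subst h1
      exact ⟨_, _, Aug.step h i z m' q L' hW hq hz hzi hcap hm hgz⟩
    · exact ih (by simpa using h1)

lemma rp_replace {P : Finset (Unt V a)} {L : List ((Finset V × Fin a) × V × Fin a)}
    (hA : Aug a r h₀ P L) :
    ∀ {h : Finset V} {i : Fin a} {p z : V × Fin a}, ((h, i), p) ∈ L → z.1 ∈ h → z.2 = i →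
      z ∉ L.map Prod.snd → RP a r h₀ P z := by
  induction hA with
  | base i' z' hz' hzi' hc' =>
    intro h i p z hmem hz hzi hzn
    simp only [List.mem_singleton] at hmem
    have h1 : h = h₀ := congrArg (fun x => x.1.1) hmem
    have h2 : i = i' := congrArg (fun x => x.1.2) hmem
    exact ⟨_, _, Aug.base i' z (h1 ▸ hz) (h2 ▸ hzi) hc'⟩
  | step g j z' m' q L' hW hq hz' hzi' hcap hm hgz ih =>
    intro h i p z hmem hz hzi hzn
    simp only [List.map_cons, List.mem_cons, not_or] at hzn
    rcases List.mem_cons.1 hmem with h1 | h1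
    · have hg : h = g := congrArg (fun x => x.1.1) h1
      have hj : i = j := congrArg (fun x => x.1.2) h1
      refine ⟨_, _, Aug.step g j z m' q L' hW hq (hg ▸ hz) (hzi.trans hj) hcap hm ?_⟩
      simp only [List.map_cons, List.mem_cons, not_or]
      exact ⟨hzn.2.1, hzn.2.2⟩
    · exact ih h1 hz hzi (by
        simp only [List.map_cons, List.mem_cons, not_or]
        exact ⟨hzn.2.1, hzn.2.2⟩)

lemma rp_extend {P : Finset (Unt V a)} {h : Finset V} {q z : V × Fin a}
    (hRP : RP a r h₀ P q) (hq : (h, q) ∈ P) (hz : z.1 ∈ h)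
    (hcap : cntc a P h z.2 < r - 1 ∨ z.2 = q.2) : RP a r h₀ P z := by
  obtain ⟨m1, L1, hA⟩ := hRP
  by_cases hzW : z ∈ ((m1, q) :: L1).map Prod.snd
  · exact rp_suffix hA hzW
  by_cases hmW : (h, z.2) ∈ ((m1, q) :: L1).map Prod.fst
  · obtain ⟨x, hxmem, hxfst⟩ := List.mem_map.1 hmW
    have : ((h, z.2), x.2) ∈ (m1, q) :: L1 := by
      rwa [show ((h, z.2), x.2) = x from Prod.ext hxfst.symm rfl]
    exact rp_replace hA this hz rfl hzW
  · exact ⟨(h, z.2), (m1, q) :: L1, Aug.step h z.2 z m1 q L1 hA hq hz rfl hcap hmW hzW⟩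

def RH (a r : ℕ) (h₀ : Finset V) (P : Finset (Unt V a)) (h : Finset V) : Prop :=
  h = h₀ ∨ ∃ q, RP a r h₀ P q ∧ (h, q) ∈ P

def MH (a r : ℕ) (h₀ : Finset V) (P : Finset (Unt V a)) (h : Finset V) (i : Fin a) : Prop :=
  (RH a r h₀ P h ∧ cntc a P h i < r - 1) ∨ (∃ w, RP a r h₀ P (w, i) ∧ (h, (w, i)) ∈ P)

lemma rp_of_mh {P : Finset (Unt V a)} {h : Finset V} {i : Fin a}
    (hMH : MH a r h₀ P h i) {v : V} (hv : v ∈ h) : RP a r h₀ P (v, i) := by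
  rcases hMH with ⟨hRH, hlt⟩ | ⟨w, hw1, hw2⟩
  · rcases hRH with h1 | ⟨q, hq1, hq2⟩
    · subst h1
      exact ⟨(h, i), [], Aug.base i (v, i) hv rfl hlt⟩
    · exact rp_extend hq1 hq2 hv (Or.inl hlt)
  · exact rp_extend hw1 hw2 hv (Or.inr rfl)

end Closure

section Main

variable {a b r : ℕ} {H : Finset (Finset V)}

lemma valid_empty : Valid a b r H (∅ : Finset (Unt V a)) := by
  refine ⟨by simp, by simp, ?_, ?_⟩
  · intro h; unfold cnt; simp
  · intro h i; unfold cntc; simp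

theorem capHall (ha : 0 < a) (hr : 1 ≤ r - 1) (hba : b ≤ a * (r - 1))
    (hcard : ∀ h ∈ H, h.card = r)
    (hdens : ∀ S : Finset V, S.Nonempty → (H.filter (fun e => e ⊆ S)).card * b ≤ a * S.card) :
    ∃ M : Finset V → Finset (V × Fin a),
      (∀ h ∈ H, ∀ p ∈ M h, p.1 ∈ h) ∧
      (∀ h ∈ H, (M h).card = b) ∧
      (∀ h h' : Finset V, ∀ p : V × Fin a, p ∈ M h → p ∈ M h' → h = h') ∧
      (∀ h ∈ H, ∀ i, ((M h).filter (fun p => p.2 = i)).card ≤ r - 1) := by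
  classical
  obtain ⟨P, hPmem, hPmax'⟩ := Finset.exists_max_image
    ((Finset.univ : Finset (Finset (Unt V a))).filter (fun P => Valid a b r H P))
    Finset.card ⟨∅, Finset.mem_filter.2 ⟨Finset.mem_univ _, valid_empty⟩⟩
  have hPV : Valid a b r H P := (Finset.mem_filter.1 hPmem).2
  have hPmax : ∀ Q, Valid a b r H Q → Q.card ≤ P.card := fun Q hQ =>
    hPmax' Q (Finset.mem_filter.2 ⟨Finset.mem_univ _, hQ⟩)
  have hfull : ∀ h ∈ H, cnt a P h = b := by
    by_contra hcon
    push_neg at hcon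
    obtain ⟨h₀, hh₀, hne⟩ := hcon
    have hdef : cnt a P h₀ < b := lt_of_le_of_ne (hPV.2.2.1 h₀) hne
    have ausg : ∀ p, RP a r h₀ P p → ∃ u ∈ P, u.2 = p := by
      intro p hp
      by_contra hun
      push_neg at hun
      obtain ⟨m, L, hA⟩ := hp
      obtain ⟨Q, hQV, hQc⟩ := aug_augment hh₀ L m p P hPV hA hdef hun
      have := hPmax Q hQV
      omega
    set RHs : Finset (Finset V) := H.filter (fun h => RH a r h₀ P h) with hRHs
    set Ih : Finset V → Finset (Fin a) :=
      fun h => Finset.univ.filter (fun i => MH a r h₀ P h i) with hIh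
    have hh₀RHs : h₀ ∈ RHs := Finset.mem_filter.2 ⟨hh₀, Or.inl rfl⟩
    have f2 : ∀ h ∈ RHs, ∀ i, i ∉ Ih h → cntc a P h i = r - 1 := by
      intro h hh i hi
      have hRHh : RH a r h₀ P h := (Finset.mem_filter.1 hh).2
      have hnMH : ¬ MH a r h₀ P h i := by
        intro hc; exact hi (Finset.mem_filter.2 ⟨Finset.mem_univ _, hc⟩)
      have h1 : ¬ (cntc a P h i < r - 1) := fun hlt => hnMH (Or.inl ⟨hRHh, hlt⟩)
      have h2 := hPV.2.2.2 h i
      omega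
    have f3 : ∀ h ∈ RHs, ∀ i ∈ Ih h, ∀ v ∈ h,
        ∃ u, u ∈ P ∧ u.2 = (v, i) ∧ u.1 ∈ RHs ∧ i ∈ Ih u.1 := by
      intro h hh i hi v hv
      have hMHhi : MH a r h₀ P h i := (Finset.mem_filter.1 hi).2
      have hrp : RP a r h₀ P (v, i) := rp_of_mh hMHhi hv
      obtain ⟨u, hu, hu2⟩ := ausg _ hrp
      have huP : (u.1, (v, i)) ∈ P := by rw [← hu2]; simpa using hu
      refine ⟨u, hu, hu2, ?_, ?_⟩
      · exact Finset.mem_filter.2 ⟨(hPV.1 u hu).1, Or.inr ⟨(v, i), hrp, huP⟩⟩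
      · exact Finset.mem_filter.2 ⟨Finset.mem_univ _, Or.inr ⟨v, hrp, huP⟩⟩
    set Si : Fin a → Finset V := fun i => (RHs.filter (fun h => i ∈ Ih h)).biUnion id with hSi
    set U : Finset (V × Fin a) := Finset.univ.biUnion
      (fun i => (Si i).map ⟨fun v => (v, i), fun x y hxy => (Prod.ext_iff.1 hxy).1⟩) with hU
    have hUmem : ∀ (v : V) (i : Fin a), ((v, i) ∈ U ↔ v ∈ Si i) := by
      intro v i
      rw [hU]
      simp only [Finset.mem_biUnion, Finset.mem_univ, true_and, Finset.mem_map,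
        Function.Embedding.coeFn_mk]
      constructor
      · rintro ⟨j, w, hw, heq⟩
        have h1 : w = v := congrArg Prod.fst heq
        have h2 : j = i := congrArg Prod.snd heq
        subst h1; subst h2; exact hw
      · intro hv; exact ⟨i, v, hv, rfl⟩
    have hUcard : U.card = ∑ i : Fin a, (Si i).card := by
      rw [hU, Finset.card_biUnion]
      · exact Finset.sum_congr rfl (fun i _ => Finset.card_map _)
      · intro x _ y _ hxy
        dsimp only [Function.onFun]
        rw [Finset.disjoint_left]
        rintro p hp hq
        simp only [Finset.mem_map, Function.Embedding.coeFn_mk] at hp hq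
        obtain ⟨w, _, rfl⟩ := hp
        obtain ⟨w', _, hc⟩ := hq
        exact hxy (congrArg Prod.snd hc).symm
    set KF : Finset (Unt V a) := P.filter (fun u => u.1 ∈ RHs ∧ u.2.2 ∈ Ih u.1) with hKF
    have hex : ∀ p ∈ U, ∃ u, u ∈ P ∧ u.2 = p ∧ u.1 ∈ RHs ∧ p.2 ∈ Ih u.1 := by
      rintro ⟨v, i⟩ hp
      have hv : v ∈ Si i := (hUmem v i).1 hp
      rw [hSi] at hv
      obtain ⟨h, hh, hvh⟩ := Finset.mem_biUnion.1 hv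
      have hhR : h ∈ RHs := (Finset.mem_filter.1 hh).1
      have hiI : i ∈ Ih h := (Finset.mem_filter.1 hh).2
      obtain ⟨u, hu1, hu2, hu3, hu4⟩ := f3 h hhR i hiI v hvh
      exact ⟨u, hu1, hu2, hu3, hu4⟩
    have hUK : U.card ≤ KF.card := by
      refine Finset.card_le_card_of_injOn
        (fun p => if hp : ∃ u, u ∈ P ∧ u.2 = p ∧ u.1 ∈ RHs ∧ p.2 ∈ Ih u.1
          then hp.choose else (∅, p)) ?_ ?_
      · intro p hp
        have hpe := hex p hp
        dsimp only
        rw [dif_pos hpe]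
        obtain ⟨hu1, hu2, hu3, hu4⟩ := hpe.choose_spec
        refine Finset.mem_filter.2 ⟨hu1, hu3, ?_⟩
        rw [show hpe.choose.2.2 = p.2 from congrArg Prod.snd hu2]
        exact hu4
      · intro p hp p' hp' heq
        have hpe := hex p hp
        have hpe' := hex p' hp'
        dsimp only at heq
        rw [dif_pos hpe, dif_pos hpe'] at heq
        have e1 : hpe.choose.2 = p := hpe.choose_spec.2.1
        have e2 : hpe'.choose.2 = p' := hpe'.choose_spec.2.1
        rw [← e1, ← e2, heq]
    have hff : ∀ (Q : Finset (Unt V a)) (h : Finset V) (i : Fin a),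
        ((Q.filter (fun u => u.1 = h)).filter (fun u => u.2.2 = i)).card
          = (Q.filter (fun u => u.1 = h ∧ u.2.2 = i)).card := by
      intro Q h i
      rw [Finset.filter_filter]
    have hKF1 : KF.card = ∑ h ∈ RHs, ∑ i ∈ Ih h, cntc a P h i := by
      rw [Finset.card_eq_sum_card_fiberwise (f := fun u => u.1) (t := RHs)
        (fun u hu => (Finset.mem_filter.1 hu).2.1)]
      refine Finset.sum_congr rfl (fun h hh => ?_)
      have step2 : KF.filter (fun u => u.1 = h) = P.filter (fun u => u.1 = h ∧ u.2.2 ∈ Ih h) := by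
        ext u
        rw [hKF]
        simp only [Finset.mem_filter, and_assoc]
        constructor
        · rintro ⟨h1, h2, h3, h4⟩
          exact ⟨h1, h4, h4 ▸ h3⟩
        · rintro ⟨h1, h2, h3⟩
          exact ⟨h1, h2.symm ▸ hh, h2.symm ▸ h3, h2⟩
      rw [step2]
      rw [Finset.card_eq_sum_card_fiberwise (f := fun u => u.2.2) (t := Ih h)
        (fun u hu => (Finset.mem_filter.1 hu).2.2)]
      refine Finset.sum_congr rfl (fun i hi => ?_)
      unfold cntc
      congr 1
      ext u
      simp only [Finset.mem_filter, and_assoc]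
      constructor
      · rintro ⟨h1, h2, h3, h4⟩
        exact ⟨h1, h2, h4⟩
      · rintro ⟨h1, h2, h3⟩
        exact ⟨h1, h2, h3.symm ▸ hi, h3⟩
    have hcnt_rh : ∀ h ∈ RHs, cnt a P h
        = (∑ i ∈ Ih h, cntc a P h i) + (a - (Ih h).card) * (r - 1) := by
      intro h hh
      unfold cnt
      rw [Finset.card_eq_sum_card_fiberwise (f := fun u => u.2.2)
        (t := (Finset.univ : Finset (Fin a))) (fun u _ => Finset.mem_univ _)]
      have : ∀ i : Fin a, ((P.filter (fun u => u.1 = h)).filter (fun u => u.2.2 = i)).card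
          = cntc a P h i := fun i => hff P h i
      rw [Finset.sum_congr rfl (fun i _ => this i)]
      rw [← Finset.sum_filter_add_sum_filter_not (Finset.univ : Finset (Fin a))
        (fun i => MH a r h₀ P h i) (fun i => cntc a P h i)]
      congr 1
      have hcc : Finset.univ.filter (fun i => ¬ MH a r h₀ P h i) = Finset.univ \ Ih h := by
        rw [hIh, Finset.filter_not]
      rw [hcc]
      have hconst : ∀ i ∈ Finset.univ \ Ih h, cntc a P h i = r - 1 := by
        intro i hi
        exact f2 h hh i (Finset.mem_sdiff.1 hi).2
      rw [Finset.sum_congr rfl hconst, Finset.sum_const, smul_eq_mul,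
        Finset.card_sdiff_of_subset (Finset.subset_univ _)]
      simp
    have hTi : ∀ i : Fin a, b * (RHs.filter (fun h => i ∈ Ih h)).card ≤ a * (Si i).card := by
      intro i
      by_cases hT : (RHs.filter (fun h => i ∈ Ih h)).Nonempty
      · obtain ⟨h1, hh1⟩ := hT
        have hsub : RHs.filter (fun h => i ∈ Ih h) ⊆ H.filter (fun e => e ⊆ Si i) := by
          intro h hh
          have hhR := (Finset.mem_filter.1 hh).1
          refine Finset.mem_filter.2 ⟨(Finset.mem_filter.1 hhR).1, ?_⟩
          rw [hSi]
          exact Finset.subset_biUnion_of_mem id hh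
        have hSnon : (Si i).Nonempty := by
          have hh1H : h1 ∈ H := (Finset.mem_filter.1 (Finset.mem_filter.1 hh1).1).1
          have hne1 : h1.Nonempty := Finset.card_pos.1 (by rw [hcard h1 hh1H]; omega)
          obtain ⟨v, hv⟩ := hne1
          rw [hSi]
          exact ⟨v, (Finset.subset_biUnion_of_mem id hh1) hv⟩
        calc b * (RHs.filter (fun h => i ∈ Ih h)).card
            ≤ b * (H.filter (fun e => e ⊆ Si i)).card :=
              Nat.mul_le_mul_left _ (Finset.card_le_card hsub)
          _ = (H.filter (fun e => e ⊆ Si i)).card * b := Nat.mul_comm _ _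
          _ ≤ a * (Si i).card := hdens _ hSnon
      · rw [Finset.not_nonempty_iff_eq_empty.1 hT]
        have hSe : Si i = ∅ := by
          have he : Si i = (RHs.filter (fun h => i ∈ Ih h)).biUnion id := rfl
          rw [he, Finset.not_nonempty_iff_eq_empty.1 hT]
          simp
        rw [hSe]
        simp
    have hdc : ∑ i : Fin a, (RHs.filter (fun h => i ∈ Ih h)).card
        = ∑ h ∈ RHs, (Ih h).card := by
      calc ∑ i : Fin a, (RHs.filter (fun h => i ∈ Ih h)).card
          = ∑ i : Fin a, ∑ h ∈ RHs, (if i ∈ Ih h then 1 else 0) := by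
            exact Finset.sum_congr rfl (fun i _ => Finset.card_filter _ _)
        _ = ∑ h ∈ RHs, ∑ i : Fin a, (if i ∈ Ih h then 1 else 0) := Finset.sum_comm
        _ = ∑ h ∈ RHs, (Ih h).card := by
            refine Finset.sum_congr rfl (fun h _ => ?_)
            rw [← Finset.card_filter]
            congr 1
            ext i
            simp
    have f7 : ∀ h ∈ RHs, a * b ≤ b * (Ih h).card + a * (r - 1) * (a - (Ih h).card) := by
      intro h _
      have hc : (Ih h).card ≤ a := le_trans (Finset.card_filter_le _ _) (by simp)
      have h1 : b * (a - (Ih h).card) ≤ a * (r - 1) * (a - (Ih h).card) :=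
        Nat.mul_le_mul_right _ hba
      have h2 : b * (Ih h).card + b * (a - (Ih h).card) = a * b := by
        rw [← Nat.mul_add, Nat.add_sub_cancel' hc, Nat.mul_comm]
      omega
    have hA : ∑ h ∈ RHs, cnt a P h
        = KF.card + ∑ h ∈ RHs, (a - (Ih h).card) * (r - 1) := by
      calc ∑ h ∈ RHs, cnt a P h
          = ∑ h ∈ RHs, ((∑ i ∈ Ih h, cntc a P h i) + (a - (Ih h).card) * (r - 1)) :=
            Finset.sum_congr rfl hcnt_rh
        _ = (∑ h ∈ RHs, ∑ i ∈ Ih h, cntc a P h i)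
            + ∑ h ∈ RHs, (a - (Ih h).card) * (r - 1) := Finset.sum_add_distrib
        _ = _ := by rw [hKF1]
    have hbig : RHs.card * (a * b) ≤ a * ∑ h ∈ RHs, cnt a P h := by
      have hstep1 : b * ∑ h ∈ RHs, (Ih h).card ≤ a * U.card := by
        rw [← hdc, Finset.mul_sum, hUcard, Finset.mul_sum]
        exact Finset.sum_le_sum (fun i _ => hTi i)
      calc RHs.card * (a * b) = ∑ _h ∈ RHs, a * b := by rw [Finset.sum_const, smul_eq_mul]
        _ ≤ ∑ h ∈ RHs, (b * (Ih h).card + a * (r - 1) * (a - (Ih h).card)) :=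
            Finset.sum_le_sum f7
        _ = b * (∑ h ∈ RHs, (Ih h).card)
            + a * ∑ h ∈ RHs, (a - (Ih h).card) * (r - 1) := by
            rw [Finset.sum_add_distrib, Finset.mul_sum, Finset.mul_sum]
            congr 1
            exact Finset.sum_congr rfl (fun h _ => by ring)
        _ ≤ a * U.card + a * ∑ h ∈ RHs, (a - (Ih h).card) * (r - 1) := by
            exact Nat.add_le_add_right hstep1 _
        _ ≤ a * KF.card + a * ∑ h ∈ RHs, (a - (Ih h).card) * (r - 1) := by
            exact Nat.add_le_add_right (Nat.mul_le_mul_left _ hUK) _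
        _ = a * ∑ h ∈ RHs, cnt a P h := by rw [hA, Nat.mul_add]
    have hsmall : ∑ h ∈ RHs, cnt a P h < RHs.card * b := by
      calc ∑ h ∈ RHs, cnt a P h < ∑ _h ∈ RHs, b :=
          Finset.sum_lt_sum (fun h _ => hPV.2.2.1 h) ⟨h₀, hh₀RHs, hdef⟩
        _ = RHs.card * b := by rw [Finset.sum_const, smul_eq_mul]
    have hstrict : a * ∑ h ∈ RHs, cnt a P h < a * (RHs.card * b) :=
      mul_lt_mul_of_pos_left hsmall ha
    have heq2 : a * (RHs.card * b) = RHs.card * (a * b) := by ring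
    omega
  refine ⟨fun h => (P.filter (fun u => u.1 = h)).image (fun u => u.2), ?_, ?_, ?_, ?_⟩
  · intro h hh p hp
    obtain ⟨u, hu, hup⟩ := Finset.mem_image.1 hp
    have h2 := (hPV.1 u (Finset.mem_of_mem_filter _ hu)).2
    have h1 : u.1 = h := (Finset.mem_filter.1 hu).2
    rw [← hup]
    exact h1 ▸ h2
  · intro h hh
    rw [Finset.card_image_of_injOn
      (fun u hu u' hu' he => hPV.2.1 u (Finset.mem_of_mem_filter _ hu)
        u' (Finset.mem_of_mem_filter _ hu') he)]
    exact hfull h hh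
  · intro h h' p hp hp'
    obtain ⟨u, hu, hup⟩ := Finset.mem_image.1 hp
    obtain ⟨u', hu', hup'⟩ := Finset.mem_image.1 hp'
    have huu : u = u' := hPV.2.1 u (Finset.mem_of_mem_filter _ hu)
      u' (Finset.mem_of_mem_filter _ hu') (by rw [hup, hup'])
    rw [← (Finset.mem_filter.1 hu).2, ← (Finset.mem_filter.1 hu').2, huu]
  · intro h hh i
    have himg : ((P.filter (fun u => u.1 = h)).image (fun u => u.2)).filter
          (fun p => p.2 = i)
        = (P.filter (fun u => u.1 = h ∧ u.2.2 = i)).image (fun u => u.2) := by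
      ext p
      simp only [Finset.mem_filter, Finset.mem_image]
      constructor
      · rintro ⟨⟨u, ⟨huP, hu1⟩, hup⟩, hpi⟩
        exact ⟨u, ⟨huP, hu1, by rw [hup]; exact hpi⟩, hup⟩
      · rintro ⟨u, ⟨huP, hu1, hu2⟩, hup⟩
        exact ⟨⟨u, ⟨huP, hu1⟩, hup⟩, by rw [← hup]; exact hu2⟩
    rw [himg]
    exact le_trans Finset.card_image_le (hPV.2.2.2 h i)

end Main



section PathPart

variable {W : Type} [LinearOrder W]

def pathOn (T : Finset W) : SimpleGraph W where
  Adj u v := u ≠ v ∧ u ∈ T ∧ v ∈ T ∧ ∀ x ∈ T, ¬(min u v < x ∧ x < max u v)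
  symm := ⟨by
    rintro u v ⟨h1, h2, h3, h4⟩
    refine ⟨h1.symm, h3, h2, ?_⟩
    rwa [min_comm v u, max_comm v u]⟩
  loopless := ⟨fun u h => h.1 rfl⟩

lemma pathOn_unique_above {T : Finset W} {u v v' : W} (h : (pathOn T).Adj u v)
    (h' : (pathOn T).Adj u v') (hv : u < v) (hv' : u < v') : v = v' := by
  by_contra hne
  rcases lt_or_gt_of_ne hne with hlt | hlt
  · exact h'.2.2.2 v h.2.2.1 ⟨by rwa [min_eq_left hv'.le], by rwa [max_eq_right hv'.le]⟩
  · exact h.2.2.2 v' h'.2.2.1 ⟨by rwa [min_eq_left hv.le], by rwa [max_eq_right hv.le]⟩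

lemma pathOn_unique_below {T : Finset W} {u v v' : W} (h : (pathOn T).Adj u v)
    (h' : (pathOn T).Adj u v') (hv : v < u) (hv' : v' < u) : v = v' := by
  by_contra hne
  rcases lt_or_gt_of_ne hne with hlt | hlt
  · exact h.2.2.2 v' h'.2.2.1 ⟨by rwa [min_eq_right hv.le], by rwa [max_eq_left hv.le]⟩
  · exact h'.2.2.2 v h.2.2.1 ⟨by rwa [min_eq_right hv'.le], by rwa [max_eq_left hv'.le]⟩

def nxtF (T : Finset W) (x : W) : W :=
  if h : (T.filter (fun y => x < y)).Nonempty then (T.filter (fun y => x < y)).min' h else x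

lemma nxtF_spec {T : Finset W} {x : W} (h : (T.filter (fun y => x < y)).Nonempty) :
    nxtF T x ∈ T ∧ x < nxtF T x := by
  unfold nxtF
  rw [dif_pos h]
  have hm := Finset.min'_mem _ h
  exact ⟨(Finset.mem_filter.1 hm).1, (Finset.mem_filter.1 hm).2⟩

lemma nxtF_le {T : Finset W} {x y : W} (hy : y ∈ T) (hxy : x < y) : nxtF T x ≤ y := by
  have h : (T.filter (fun z => x < z)).Nonempty := ⟨y, Finset.mem_filter.2 ⟨hy, hxy⟩⟩
  unfold nxtF
  rw [dif_pos h]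
  exact Finset.min'_le _ _ (Finset.mem_filter.2 ⟨hy, hxy⟩)

lemma adj_nxtF {T : Finset W} {x : W} (hx : x ∈ T)
    (h : (T.filter (fun y => x < y)).Nonempty) : (pathOn T).Adj x (nxtF T x) := by
  obtain ⟨hmem, hlt⟩ := nxtF_spec h
  refine ⟨hlt.ne, hx, hmem, ?_⟩
  rintro y hy ⟨h1, h2⟩
  rw [min_eq_left hlt.le] at h1
  rw [max_eq_right hlt.le] at h2
  exact absurd (nxtF_le hy h1) (not_le.2 h2)

lemma adj_above_eq {T : Finset W} {u v : W} (hadj : (pathOn T).Adj u v) (huv : u < v) :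
    v = nxtF T u := by
  have hvm : v ∈ T := hadj.2.2.1
  have h : (T.filter (fun y => u < y)).Nonempty := ⟨v, Finset.mem_filter.2 ⟨hvm, huv⟩⟩
  obtain ⟨hmem, hlt⟩ := nxtF_spec (T := T) (x := u) h
  refine le_antisymm ?_ (nxtF_le hvm huv)
  by_contra hc
  push_neg at hc
  exact hadj.2.2.2 (nxtF T u) hmem ⟨by rwa [min_eq_left huv.le], by rwa [max_eq_right huv.le]⟩

lemma pathOn_edgeSet_eq {T : Finset W} (hT : T.Nonempty) :
    (pathOn T).edgeSet = (fun x => s(x, nxtF T x)) '' (↑(T.erase (T.max' hT)) : Set W) := by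
  ext e
  refine Sym2.inductionOn e (fun u v => ?_)
  constructor
  · intro he
    rw [SimpleGraph.mem_edgeSet] at he
    rcases he.1.lt_or_gt with hlt | hlt
    · refine ⟨u, ?_, ?_⟩
      · simp only [Finset.coe_erase, Set.mem_diff, Finset.mem_coe, Set.mem_singleton_iff]
        refine ⟨he.2.1, ?_⟩
        intro hc
        exact absurd (hc ▸ Finset.le_max' T v he.2.2.1) (not_le.2 hlt)
      · show s(u, nxtF T u) = s(u, v)
        rw [← adj_above_eq he hlt]
    · refine ⟨v, ?_, ?_⟩
      · simp only [Finset.coe_erase, Set.mem_diff, Finset.mem_coe, Set.mem_singleton_iff]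
        refine ⟨he.2.2.1, ?_⟩
        intro hc
        exact absurd (hc ▸ Finset.le_max' T u he.2.1) (not_le.2 hlt)
      · show s(v, nxtF T v) = s(u, v)
        rw [← adj_above_eq he.symm hlt, Sym2.eq_swap]
  · rintro ⟨x, hx, heq⟩
    simp only [Finset.coe_erase, Set.mem_diff, Finset.mem_coe, Set.mem_singleton_iff] at hx
    have hne : (T.filter (fun y => x < y)).Nonempty := by
      refine ⟨T.max' hT, Finset.mem_filter.2 ⟨T.max'_mem hT, ?_⟩⟩
      exact lt_of_le_of_ne (Finset.le_max' T x hx.1) hx.2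
    have heq' : s(x, nxtF T x) = s(u, v) := heq
    rw [← heq', SimpleGraph.mem_edgeSet]
    exact adj_nxtF hx.1 hne

lemma pathOn_edge_ncard {T : Finset W} (hT : T.Nonempty) :
    (pathOn T).edgeSet.ncard = T.card - 1 := by
  rw [pathOn_edgeSet_eq hT, Set.ncard_image_of_injOn, Set.ncard_coe_finset,
    Finset.card_erase_of_mem (T.max'_mem hT)]
  intro x hx y hy hxy
  simp only [Finset.coe_erase, Set.mem_diff, Finset.mem_coe, Set.mem_singleton_iff] at hx hy
  have hxlt : x < nxtF T x := by
    have hne : (T.filter (fun z => x < z)).Nonempty :=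
      ⟨T.max' hT, Finset.mem_filter.2 ⟨T.max'_mem hT, lt_of_le_of_ne (Finset.le_max' T x hx.1) hx.2⟩⟩
    exact (nxtF_spec hne).2
  have hylt : y < nxtF T y := by
    have hne : (T.filter (fun z => y < z)).Nonempty :=
      ⟨T.max' hT, Finset.mem_filter.2 ⟨T.max'_mem hT, lt_of_le_of_ne (Finset.le_max' T y hy.1) hy.2⟩⟩
    exact (nxtF_spec hne).2
  rcases Sym2.eq_iff.1 hxy with ⟨h1, h2⟩ | ⟨h1, h2⟩
  · exact h1
  · exact absurd (h1 ▸ (h2 ▸ hxlt).trans hylt) (lt_irrefl _)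

lemma pathOn_isAcyclic (T : Finset W) : (pathOn T).IsAcyclic := by
  rw [SimpleGraph.isAcyclic_iff_forall_adj_isBridge]
  have key : ∀ u v : W, (pathOn T).Adj u v → u < v →
      ¬(pathOn T \ SimpleGraph.fromEdgeSet {s(u, v)}).Reachable u v := by
    intro u v hadj huv hreach
    have hwalk : ∀ (s z : W), (pathOn T \ SimpleGraph.fromEdgeSet {s(u, v)}).Walk s z →
        s ≤ u → z ≤ u := by
      intro s z w
      induction w with
      | nil => exact fun h => h
      | @cons s x z hadj' p ih =>
        intro hs
        refine ih ?_
        by_contra hxc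
        push_neg at hxc
        have hGadj : (pathOn T).Adj s x := hadj'.1
        have hnotdel : ¬ (SimpleGraph.fromEdgeSet {s(u, v)}).Adj s x := hadj'.2
        rcases eq_or_lt_of_le hs with heq | hlt
        · subst heq
        -- s = u : x must be v
          have hxv : x = v := pathOn_unique_above hGadj hadj hxc huv
          subst hxv
          exact hnotdel (by simp [SimpleGraph.fromEdgeSet_adj, hGadj.ne])
        · exact hGadj.2.2.2 u hadj.2.1
            ⟨by rw [min_eq_left (hlt.trans hxc).le]; exact hlt,
             by rw [max_eq_right (hlt.trans hxc).le]; exact hxc⟩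
    obtain ⟨w⟩ := hreach
    exact absurd (hwalk u v w le_rfl) (not_le.2 huv)
  intro u v hadj
  rw [SimpleGraph.isBridge_iff]
  rcases hadj.ne.lt_or_gt with hlt | hlt
  · exact key u v hadj hlt
  · intro hre
    apply key v u hadj.symm hlt
    rw [show s(v, u) = s(u, v) from Sym2.eq_swap]
    exact hre.symm

end PathPart



section MainTheorem

variable {V : Type} [Fintype V] [DecidableEq V]

theorem hypergraph_decomposition_aux
    (r D a b : ℕ) (ha : 0 < a) (hb : 0 < b)
    (H : Finset (Finset V))
    (hunif : ∀ e ∈ H, e.card = r)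
    (hdeg : ∀ v : V, (H.filter (fun e => v ∈ e)).card ≤ D)
    (hbr : r - 1 < b)
    (hab : b < a * (r - 1))
    (hdens : ∀ S : Finset V, S.Nonempty →
      (H.filter (fun e => e ⊆ S)).card * b ≤ a * S.card) :
    ∃ Hg : Fin a → SimpleGraph V,
      (∀ i, ∀ c : (Hg i).ConnectedComponent,
        {e ∈ (Hg i).edgeSet | ∀ v ∈ e, v ∈ c.supp}.ncard ≤ c.supp.ncard) ∧
      (∀ i, ∀ v : V, ((Hg i).neighborSet v).ncard ≤ 2 * D) ∧
      (∀ h ∈ H, ∃ F : Fin a → SimpleGraph V,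
        (∀ i, F i ≤ Hg i) ∧
        (∀ i, (F i).IsAcyclic) ∧
        (∀ i, ∀ u v : V, (F i).Adj u v → u ∈ h ∧ v ∈ h) ∧
        (∑ i, (F i).edgeSet.ncard) = b) := by
  classical
  have hr2 : 1 ≤ r - 1 := by
    rcases Nat.eq_zero_or_pos (r - 1) with h0 | h1
    · rw [h0, Nat.mul_zero] at hab; omega
    · exact h1
  letI : LinearOrder V :=
    LinearOrder.lift' (fun v => (Fintype.equivFin V) v) (Fintype.equivFin V).injective
  obtain ⟨M, hM1, hM2, hM3, hM4⟩ := capHall (b := b) ha hr2 (le_of_lt hab) hunif hdens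
  set S : Finset V → Fin a → Finset V :=
    fun h i => ((M h).filter (fun p => p.2 = i)).image Prod.fst with hSdef
  have hSmem : ∀ (h : Finset V) (i : Fin a) (v : V), v ∈ S h i ↔ (v, i) ∈ M h := by
    intro h i v
    rw [hSdef]
    simp only [Finset.mem_image, Finset.mem_filter]
    constructor
    · rintro ⟨p, ⟨hp, hpi⟩, hpv⟩
      rw [← hpv, ← hpi]
      exact hp
    · intro hv
      exact ⟨(v, i), ⟨hv, rfl⟩, rfl⟩
  have hSsub : ∀ h ∈ H, ∀ (i : Fin a), S h i ⊆ h := by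
    intro h hh i v hv
    exact hM1 h hh (v, i) ((hSmem h i v).1 hv)
  have hScard : ∀ h ∈ H, ∀ i : Fin a, (S h i).card ≤ r - 1 := by
    intro h hh i
    exact le_trans Finset.card_image_le (hM4 h hh i)
  have hsd : ∀ h ∈ H, ∀ i : Fin a, (h \ S h i).Nonempty := by
    intro h hh i
    rw [Finset.sdiff_nonempty]
    intro hsub
    have := Finset.card_le_card hsub
    have h2 := hScard h hh i
    rw [hunif h hh] at this
    omega
  set T : Finset V → Fin a → Finset V := fun h i =>
    if hne : (h \ S h i).Nonempty then insert ((h \ S h i).min' hne) (S h i) else S h i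
    with hTdef
  have hT : ∀ (h : Finset V) (hh : h ∈ H) (i : Fin a),
      T h i = insert ((h \ S h i).min' (hsd h hh i)) (S h i) := by
    intro h hh i
    rw [hTdef]
    simp only
    rw [dif_pos (hsd h hh i)]
  have hTsub : ∀ h ∈ H, ∀ i : Fin a, T h i ⊆ h := by
    intro h hh i
    rw [hT h hh i]
    intro v hv
    rcases Finset.mem_insert.1 hv with h1 | h1
    · rw [h1]
      exact (Finset.mem_sdiff.1 (Finset.min'_mem _ (hsd h hh i))).1
    · exact hSsub h hh i h1
  have hTnon : ∀ h ∈ H, ∀ i : Fin a, (T h i).Nonempty := by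
    intro h hh i
    rw [hT h hh i]
    exact Finset.insert_nonempty _ _
  have hTcard : ∀ h ∈ H, ∀ i : Fin a, (T h i).card = (S h i).card + 1 := by
    intro h hh i
    rw [hT h hh i, Finset.card_insert_of_notMem]
    exact fun hc => (Finset.mem_sdiff.1 (Finset.min'_mem _ (hsd h hh i))).2 hc
  have hedgecnt : ∀ h ∈ H, ∀ i : Fin a,
      (pathOn (T h i)).edgeSet.ncard = (S h i).card := by
    intro h hh i
    rw [pathOn_edge_ncard (hTnon h hh i), hTcard h hh i]
    omega
  have hsum : ∀ h ∈ H, ∑ i : Fin a, (S h i).card = b := by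
    intro h hh
    have h1 : (M h).card = ∑ i : Fin a, ((M h).filter (fun p => p.2 = i)).card :=
      Finset.card_eq_sum_card_fiberwise (fun p _ => Finset.mem_univ p.2)
    have h2 : ∀ i : Fin a, ((M h).filter (fun p => p.2 = i)).card = (S h i).card := by
      intro i
      rw [hSdef]
      rw [Finset.card_image_of_injOn]
      intro p hp p' hp' he
      have e1 : p.2 = i := (Finset.mem_filter.1 hp).2
      have e2 : p'.2 = i := (Finset.mem_filter.1 hp').2
      exact Prod.ext he (e1.trans e2.symm)
    rw [← hM2 h hh, h1]
    exact Finset.sum_congr rfl (fun i _ => (h2 i).symm)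
  have huniq : ∀ (i : Fin a) (v : V) (h h' : Finset V),
      v ∈ S h i → v ∈ S h' i → h = h' := by
    intro i v h h' hv hv'
    exact hM3 h h' (v, i) ((hSmem h i v).1 hv) ((hSmem h' i v).1 hv')
  set Hg : Fin a → SimpleGraph V := fun i =>
    { Adj := fun u v => ∃ h ∈ H, (pathOn (T h i)).Adj u v
      symm := ⟨by rintro u v ⟨h, hh, hadj⟩; exact ⟨h, hh, hadj.symm⟩⟩
      loopless := ⟨by rintro u ⟨h, hh, hadj⟩; exact hadj.ne rfl⟩ } with hHgdef
  have hHgAdj : ∀ (i : Fin a) (u v : V),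
      (Hg i).Adj u v ↔ ∃ h ∈ H, (pathOn (T h i)).Adj u v := fun i u v => Iff.rfl
  have hHgedge : ∀ (i : Fin a) (e : Sym2 V),
      e ∈ (Hg i).edgeSet ↔ ∃ h ∈ H, e ∈ (pathOn (T h i)).edgeSet := by
    intro i e
    refine Sym2.inductionOn e (fun u v => ?_)
    rw [SimpleGraph.mem_edgeSet, hHgAdj]
    constructor
    · rintro ⟨h, hh, hadj⟩; exact ⟨h, hh, (SimpleGraph.mem_edgeSet _).2 hadj⟩
    · rintro ⟨h, hh, he⟩; exact ⟨h, hh, (SimpleGraph.mem_edgeSet _).1 he⟩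
  -- min/max of an edge
  have hinfsup : ∃ (inf2 sup2 : Sym2 V → V),
      (∀ x y : V, inf2 s(x, y) = min x y) ∧ (∀ x y : V, sup2 s(x, y) = max x y) :=
    ⟨Sym2.lift ⟨fun x y => min x y, fun x y => min_comm x y⟩,
     Sym2.lift ⟨fun x y => max x y, fun x y => max_comm x y⟩,
     fun x y => rfl, fun x y => rfl⟩
  obtain ⟨inf2, sup2, hinf, hsup⟩ := hinfsup
  have hsym2eq : ∀ e : Sym2 V, s(inf2 e, sup2 e) = e := by
    intro e
    refine Sym2.inductionOn e (fun x y => ?_)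
    rw [hinf, hsup]
    rcases le_total x y with hxy | hxy
    · rw [min_eq_left hxy, max_eq_right hxy]
    · rw [min_eq_right hxy, max_eq_left hxy, Sym2.eq_swap]
  have hmeminf : ∀ e : Sym2 V, inf2 e ∈ e ∧ sup2 e ∈ e := by
    intro e
    refine Sym2.inductionOn e (fun x y => ?_)
    rw [hinf, hsup]
    constructor
    · rcases min_choice x y with hm | hm <;> rw [hm] <;> simp [Sym2.mem_iff]
    · rcases max_choice x y with hm | hm <;> rw [hm] <;> simp [Sym2.mem_iff]
  have hadj2 : ∀ (G' : SimpleGraph V) (e : Sym2 V), e ∈ G'.edgeSet →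
      G'.Adj (inf2 e) (sup2 e) := by
    intro G' e he
    rw [← hsym2eq e] at he
    exact (SimpleGraph.mem_edgeSet _).1 he
  have hle2 : ∀ e : Sym2 V, inf2 e ≤ sup2 e := by
    intro e
    refine Sym2.inductionOn e (fun x y => ?_)
    rw [hinf, hsup]
    exact min_le_max
  have hstrict : ∀ (G' : SimpleGraph V) (e : Sym2 V), e ∈ G'.edgeSet →
      inf2 e < sup2 e := by
    intro G' e he
    exact lt_of_le_of_ne (hle2 e) (hadj2 G' e he).ne
  refine ⟨Hg, ?_, ?_, ?_⟩
  · -- D1: components are unicyclic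
    intro i c
    set own : Sym2 V → V := fun e =>
      if (∃ h, h ∈ H ∧ ∃ hne : (h \ S h i).Nonempty,
          e ∈ (pathOn (T h i)).edgeSet ∧ inf2 e < (h \ S h i).min' hne)
        then inf2 e else sup2 e with howndef
    have hor : ∀ e : Sym2 V, own e = inf2 e ∨ own e = sup2 e := by
      intro e
      simp only [howndef]
      split_ifs
      · exact Or.inl rfl
      · exact Or.inr rfl
    have hcase : ∀ e ∈ (Hg i).edgeSet, ∃ h, h ∈ H ∧ e ∈ (pathOn (T h i)).edgeSet ∧
        own e ∈ S h i ∧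
        ((∃ hne : (h \ S h i).Nonempty, own e = inf2 e ∧
            inf2 e < (h \ S h i).min' hne) ∨
         (own e = sup2 e ∧ ∀ g, g ∈ H → ∀ hne : (g \ S g i).Nonempty,
            e ∈ (pathOn (T g i)).edgeSet → (g \ S g i).min' hne ≤ inf2 e)) := by
      intro e he
      by_cases hcnd : ∃ h, h ∈ H ∧ ∃ hne : (h \ S h i).Nonempty,
          e ∈ (pathOn (T h i)).edgeSet ∧ inf2 e < (h \ S h i).min' hne
      · obtain ⟨h, hh, hne, hmem, hlt⟩ := hcnd
        have howne : own e = inf2 e := by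
          simp only [howndef]
          rw [if_pos ⟨h, hh, hne, hmem, hlt⟩]
        have hadjT := hadj2 _ e hmem
        have hinfT : inf2 e ∈ T h i := hadjT.2.1
        rw [hT h hh i] at hinfT
        have hinfS : inf2 e ∈ S h i := by
          rcases Finset.mem_insert.1 hinfT with h1 | h1
          · exfalso
            rw [h1] at hlt
            exact lt_irrefl _ hlt
          · exact h1
        exact ⟨h, hh, hmem, by rw [howne]; exact hinfS, Or.inl ⟨hne, howne, hlt⟩⟩
      · have howne : own e = sup2 e := by
          simp only [howndef]
          rw [if_neg hcnd]
        push_neg at hcnd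
        obtain ⟨h, hh, hmem⟩ := (hHgedge i e).1 he
        have hadjT := hadj2 _ e hmem
        have hsupT : sup2 e ∈ T h i := hadjT.2.2.1
        rw [hT h hh i] at hsupT
        have hwle : (h \ S h i).min' (hsd h hh i) ≤ inf2 e :=
          hcnd h hh (hsd h hh i) hmem
        have hsupS : sup2 e ∈ S h i := by
          rcases Finset.mem_insert.1 hsupT with h1 | h1
          · exfalso
            have hst := hstrict _ e hmem
            rw [h1] at hst
            exact absurd (lt_of_le_of_lt hwle hst) (lt_irrefl _)
          · exact h1
        exact ⟨h, hh, hmem, by rw [howne]; exact hsupS, Or.inr ⟨howne, hcnd⟩⟩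
    refine Set.ncard_le_ncard_of_injOn own ?_ ?_ (Set.toFinite _)
    · intro e he
      rcases hor e with h1 | h1 <;> rw [h1]
      · exact he.2 (inf2 e) (hmeminf e).1
      · exact he.2 (sup2 e) (hmeminf e).2
    · intro e he e' he' heq
      obtain ⟨h1, hh1, hmem1, hS1, hc1⟩ := hcase e he.1
      obtain ⟨h2, hh2, hmem2, hS2, hc2⟩ := hcase e' he'.1
      have hheq : h1 = h2 := huniq i (own e) h1 h2 hS1 (by rw [heq]; exact hS2)
      subst hheq
      rcases hc1 with ⟨hne1, ho1, hlt1⟩ | ⟨ho1, hall1⟩ <;>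
        rcases hc2 with ⟨hne2, ho2, hlt2⟩ | ⟨ho2, hall2⟩
      · have hx : inf2 e = inf2 e' := by rw [← ho1, ← ho2, heq]
        have ha1 := hadj2 _ _ hmem1
        have ha2 := hadj2 _ _ hmem2
        rw [← hx] at ha2
        have hs := pathOn_unique_above ha1 ha2 (hstrict _ _ hmem1)
          (by rw [hx]; exact hstrict _ _ hmem2)
        rw [← hsym2eq e, ← hsym2eq e', hs, hx]
      · exfalso
        have hle := hall2 h1 hh1 hne1 hmem2
        have hlt2' := hstrict _ _ hmem2
        have hchain : inf2 e < sup2 e' :=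
          lt_of_lt_of_le hlt1 (le_trans hle (le_of_lt hlt2'))
        have hx : inf2 e = sup2 e' := by rw [← ho1, ← ho2, heq]
        rw [← hx] at hchain
        exact lt_irrefl _ hchain
      · exfalso
        have hle := hall1 h1 hh1 hne2 hmem1
        have hlt1' := hstrict _ _ hmem1
        have hchain : inf2 e' < sup2 e :=
          lt_of_lt_of_le hlt2 (le_trans hle (le_of_lt hlt1'))
        have hx : sup2 e = inf2 e' := by rw [← ho1, ← ho2, heq]
        rw [← hx] at hchain
        exact lt_irrefl _ hchain
      · have hx : sup2 e = sup2 e' := by rw [← ho1, ← ho2, heq]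
        have ha1 := (hadj2 _ _ hmem1).symm
        have ha2 := (hadj2 _ _ hmem2).symm
        rw [← hx] at ha2
        have hs := pathOn_unique_below ha1 ha2 (hstrict _ _ hmem1)
          (by rw [hx]; exact hstrict _ _ hmem2)
        rw [← hsym2eq e, ← hsym2eq e', hs, hx]
  · -- degree bound
    intro i v
    have hkey : ((Hg i).neighborSet v).ncard ≤
        (((H.filter (fun g => v ∈ g)) ×ˢ (Finset.univ : Finset Bool)) : Finset _).card := by
      rw [← Set.ncard_coe_finset]
      refine Set.ncard_le_ncard_of_injOn
        (fun u => ((if hex : ∃ g, g ∈ H ∧ (pathOn (T g i)).Adj v u then hex.choose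
          else (∅ : Finset V)), decide (u < v))) ?_ ?_ (Set.toFinite _)
      · intro u hu
        have hex : ∃ g, g ∈ H ∧ (pathOn (T g i)).Adj v u := hu
        rw [dif_pos hex]
        have hspec := hex.choose_spec
        refine Finset.mem_coe.2 (Finset.mem_product.2 ⟨?_, Finset.mem_univ _⟩)
        refine Finset.mem_filter.2 ⟨hspec.1, ?_⟩
        exact hTsub _ hspec.1 i hspec.2.2.1
      · intro u hu u' hu' heq
        have hex : ∃ g, g ∈ H ∧ (pathOn (T g i)).Adj v u := hu
        have hex' : ∃ g, g ∈ H ∧ (pathOn (T g i)).Adj v u' := hu'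
        dsimp only at heq
        rw [dif_pos hex, dif_pos hex'] at heq
        have hgeq : hex.choose = hex'.choose := congrArg Prod.fst heq
        have hbeq : decide (u < v) = decide (u' < v) := congrArg Prod.snd heq
        have hadj : (pathOn (T hex.choose i)).Adj v u := hex.choose_spec.2
        have hadj' : (pathOn (T hex.choose i)).Adj v u' := by
          rw [hgeq]; exact hex'.choose_spec.2
        by_cases hu1 : u < v
        · have hu2 : u' < v := by
            have hd : decide (u' < v) = true := by
              rw [← hbeq]; exact decide_eq_true hu1
            exact of_decide_eq_true hd
          exact pathOn_unique_below hadj hadj' hu1 hu2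
        · have hu2 : ¬ u' < v := by
            intro hcon
            have hd : decide (u < v) = true := by
              rw [hbeq]; exact decide_eq_true hcon
            exact hu1 (of_decide_eq_true hd)
          have hv1 : v < u := lt_of_le_of_ne (not_lt.1 hu1) hadj.ne
          have hv2 : v < u' := lt_of_le_of_ne (not_lt.1 hu2) hadj'.ne
          exact pathOn_unique_above hadj hadj' hv1 hv2
    refine le_trans hkey ?_
    rw [Finset.card_product]
    have hD := hdeg v
    simp only [Finset.card_univ, Fintype.card_bool]
    omega
  · -- D2: forests
    intro h hh
    refine ⟨fun i => pathOn (T h i), ?_, ?_, ?_, ?_⟩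
    · intro i u v hadj
      exact ⟨h, hh, hadj⟩
    · intro i
      exact pathOn_isAcyclic _
    · intro i u v hadj
      exact ⟨hTsub h hh i hadj.2.1, hTsub h hh i hadj.2.2.1⟩
    · rw [Finset.sum_congr rfl (fun i _ => hedgecnt h hh i)]
      exact hsum h hh

end MainTheorem

end HypDecomp

/-- decomposition lemma. If `H` is an `r`-uniform hypergraph with maximum degree
`D` and maximal density `m(H) ≤ a/b`, where `b > r-1` and `a > b/(r-1)`, then there are graphs
`H₁, …, H_a` on `V(H)` such that (D1) every connected component of each `H_i` is unicyclic
(it has at most as many edges as vertices) and `H_i` has maximum degree at most `2D`, and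
(D2) for every hyperedge `h` there are forests `F_i ⊆ H_i` with all edges inside `h` whose
edge counts sum to `b`. -/
theorem hypergraph_decomposition {V : Type} [Fintype V] [DecidableEq V]
    (r D a b : ℕ) (ha : 0 < a) (hb : 0 < b)
    (H : Finset (Finset V))
    (hunif : ∀ e ∈ H, e.card = r)
    (hdeg : ∀ v : V, (H.filter (fun e => v ∈ e)).card ≤ D)
    (hbr : r - 1 < b)
    (hab : b < a * (r - 1))
    (hdens : ∀ S : Finset V, S.Nonempty →
      (H.filter (fun e => e ⊆ S)).card * b ≤ a * S.card) :
    ∃ Hg : Fin a → SimpleGraph V,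
      (∀ i, ∀ c : (Hg i).ConnectedComponent,
        {e ∈ (Hg i).edgeSet | ∀ v ∈ e, v ∈ c.supp}.ncard ≤ c.supp.ncard) ∧
      (∀ i, ∀ v : V, ((Hg i).neighborSet v).ncard ≤ 2 * D) ∧
      (∀ h ∈ H, ∃ F : Fin a → SimpleGraph V,
        (∀ i, F i ≤ Hg i) ∧
        (∀ i, (F i).IsAcyclic) ∧
        (∀ i, ∀ u v : V, (F i).Adj u v → u ∈ h ∧ v ∈ h) ∧
        (∑ i, (F i).edgeSet.ncard) = b) := by
  exact HypDecomp.hypergraph_decomposition_aux r D a b ha hb H hunif hdeg hbr hab hdens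
end

section
/- Let M be a finite matroid on ground set E in which every singleton is independent (M has no loops), and let k(M) = max over all nonempty subsets S ⊆ E of ⌈|S| / r(S)⌉, where r(S) is the maximum size of an independent set contained in S. Then E can be partitioned into k(M) sets, each of which is independent in M. -/
open Set

namespace EdmondsAux

variable {α : Type} {M : Matroid α}

/-- An independent set inside the closure of an independent set is no larger. -/
lemma encard_le_of_subset_closure {I K : Set α} (hI : M.Indep I) (hK : M.Indep K)
    (hIK : I ⊆ M.closure K) : I.encard ≤ K.encard := by
  obtain ⟨Jb, hJ, hIJ⟩ := hI.subset_isBasis_of_subset hIK (M.closure_subset_ground K)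
  have hKb : M.IsBasis K (M.closure K) := hK.isBasis_closure
  rw [← hJ.encard_eq_encard hKb]
  exact encard_le_encard hIJ

lemma ncard_le_of_subset_closure {I K : Set α} (hI : M.Indep I) (hK : M.Indep K)
    (hIK : I ⊆ M.closure K) (hKfin : K.Finite) : I.ncard ≤ K.ncard := by
  have h := encard_le_of_subset_closure hI hK hIK
  have hIfin : I.Finite := by
    rw [← Set.encard_lt_top_iff] at hKfin ⊢
    exact lt_of_le_of_lt h hKfin
  rw [Set.ncard_def, Set.ncard_def]
  exact ENat.toNat_le_toNat h (by rwa [← Set.encard_lt_top_iff, lt_top_iff_ne_top] at hKfin)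

/-- "Lemma R": a set whose closure contains an independent set at least as large is independent. -/
lemma indep_of_card_le_of_subset_closure {I J : Set α} (hI : M.Indep I) (hJE : J ⊆ M.E)
    (hJfin : J.Finite) (hIcl : I ⊆ M.closure J) (hcard : J.ncard ≤ I.ncard) :
    M.Indep J := by
  obtain ⟨K, hK⟩ := M.exists_isBasis J hJE
  have hKfin : K.Finite := hJfin.subset hK.subset
  have h1 : I ⊆ M.closure K := by rw [hK.closure_eq_closure]; exact hIcl
  have h2 : I.ncard ≤ K.ncard := ncard_le_of_subset_closure hI hK.indep h1 hKfin
  have h3 : J ⊆ K := by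
    have := Set.eq_of_subset_of_ncard_le hK.subset
      (le_trans (le_trans hcard h2) le_rfl) hJfin
    exact this.symm.subset
  exact hK.indep.subset h3


/-- Core lemma: if `insert y I0` is dependent, `B ⊆ insert y I0` is independent, `w` is
outside `B`, and every element outside `B ∪ {w}` is in no circuit of `insert y I0`
(i.e. removing it leaves a dependent set), then `w` is spanned by `B`. -/
lemma mem_closure_core {I0 B : Set α} {w y : α} (hI0 : M.Indep I0) (hfin : I0.Finite)
    (hyE : y ∈ M.E) (hy : y ∉ I0)
    (hdep : ¬ M.Indep (insert y I0)) (hB : M.Indep B) (hBS : B ⊆ insert y I0)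
    (hw : w ∈ insert y I0) (hwB : w ∉ B)
    (hq : ∀ q ∈ insert y I0, q ∉ B → q ≠ w → ¬ M.Indep (insert y I0 \ {q})) :
    w ∈ M.closure B := by
  set S := insert y I0 with hSdef
  have hSE : S ⊆ M.E := insert_subset hyE hI0.subset_ground
  have hSfin : S.Finite := hfin.insert y
  have hScard : S.ncard ≤ I0.ncard + 1 := by
    rw [hSdef]
    exact (Set.ncard_insert_le y I0).trans (by omega)
  have key : ∀ n (C : Set α), (S \ C).ncard = n → M.Indep C → insert w B ⊆ C → C ⊆ S → False := by
    intro n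
    induction n using Nat.strong_induction_on with
    | _ n ih =>
      intro C hCcard hC hwBC hCS
      have hne : (S \ C).Nonempty := by
        rcases eq_empty_or_nonempty (S \ C) with h | h
        · exact absurd ((diff_eq_empty.mp h).antisymm hCS ▸ hC) hdep
        · exact h
      obtain ⟨q, hqS, hqC⟩ := hne
      by_cases hins : M.Indep (insert q C)
      · refine ih ((S \ insert q C).ncard) ?_ _ rfl hins
          (hwBC.trans (subset_insert _ _)) (insert_subset hqS hCS)
        have hrw : S \ insert q C = (S \ C) \ {q} := by
          ext a; simp only [mem_diff, mem_insert_iff, mem_singleton_iff]; tauto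
        rw [hrw, ← hCcard]
        exact Set.ncard_diff_singleton_lt_of_mem ⟨hqS, hqC⟩ hSfin.diff
      · have hqE : q ∈ M.E := hSE hqS
        have hqcl : q ∈ M.closure C := by
          by_contra h
          exact hins ((hC.insert_indep_iff_of_notMem hqC).mpr ⟨hqE, h⟩)
        have h2 : q ∈ M.closure (S \ {q}) :=
          M.closure_subset_closure (subset_diff_singleton hCS hqC) hqcl
        have h3 : M.closure (S \ {q}) = M.closure S :=
          Matroid.closure_diff_singleton_eq_closure h2
        have hI0cl : I0 ⊆ M.closure (S \ {q}) := by
          rw [h3]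
          exact (subset_insert y I0).trans (M.subset_closure S hSE)
        have hcard2 : (S \ {q}).ncard ≤ I0.ncard := by
          have := Set.ncard_diff_singleton_lt_of_mem hqS hSfin
          omega
        have hindSq : M.Indep (S \ {q}) :=
          indep_of_card_le_of_subset_closure hI0 (diff_subset.trans hSE)
            hSfin.diff hI0cl hcard2
        have hqB : q ∉ B := fun h => hqC (hwBC (mem_insert_of_mem _ h))
        have hqw : q ≠ w := fun h => hqC (hwBC (h ▸ mem_insert _ _))
        exact hq q hqS hqB hqw hindSq
  by_contra hwcl
  have hwE : w ∈ M.E := hSE hw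
  have hiwB : M.Indep (insert w B) := (hB.insert_indep_iff_of_notMem hwB).mpr ⟨hwE, hwcl⟩
  exact key _ (insert w B) rfl hiwB subset_rfl (insert_subset hw hBS)

/-- "Lemma B": `z` stays spanned after deleting `Q ∪ {z}` and adding `y`. -/
lemma lemB {I0 Q : Set α} {y z : α} (hI0 : M.Indep I0) (hfin : I0.Finite) (hyE : y ∈ M.E)
    (hy : y ∉ I0) (hdep : ¬ M.Indep (insert y I0)) (hz : z ∈ I0)
    (hzind : M.Indep (insert y (I0 \ {z}))) (hQ : Q ⊆ I0)
    (hQdep : ∀ q ∈ Q, ¬ M.Indep (insert y (I0 \ {q}))) :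
    z ∈ M.closure (insert y (I0 \ (Q ∪ {z}))) := by
  have hzy : z ≠ y := fun h => hy (h ▸ hz)
  have hBsub : insert y (I0 \ (Q ∪ {z})) ⊆ insert y I0 :=
    insert_subset_insert diff_subset
  have hBind : M.Indep (insert y (I0 \ (Q ∪ {z}))) := by
    refine hzind.subset (insert_subset_insert ?_)
    exact diff_subset_diff_right subset_union_right
  have hres := mem_closure_core (B := insert y (I0 \ (Q ∪ {z}))) (w := z)
    hI0 hfin hyE hy hdep hBind hBsub (mem_insert_of_mem _ hz) ?_ ?_
  · exact hres
  · simp only [mem_insert_iff, mem_diff, mem_union, mem_singleton_iff]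
    push_neg
    exact ⟨hzy, fun _ => Or.inr trivial⟩
  · intro q hqS hqB hqz
    have hqy : q ≠ y := fun h => hqB (h ▸ mem_insert _ _)
    have hqI0 : q ∈ I0 := by
      rcases hqS with h | h
      · exact absurd h hqy
      · exact h
    have hqQ : q ∈ Q := by
      by_contra hqQ
      exact hqB (mem_insert_of_mem _ ⟨hqI0, by simp [hqQ, hqz]⟩)
    rw [← Set.insert_diff_singleton_comm hqy.symm]
    exact hQdep q hqQ

/-- "Lemma C": a dependent insertion is spanned by its exchangeable elements. -/
lemma lemC {I0 : Set α} {y : α} (hI0 : M.Indep I0) (hfin : I0.Finite) (hyE : y ∈ M.E)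
    (hy : y ∉ I0) (hdep : ¬ M.Indep (insert y I0)) :
    y ∈ M.closure {v ∈ I0 | M.Indep (insert y (I0 \ {v}))} := by
  refine mem_closure_core hI0 hfin hyE hy hdep (hI0.subset (sep_subset _ _))
    ((sep_subset _ _).trans (subset_insert _ _)) (mem_insert _ _)
    (fun h => hy (sep_subset _ _ h)) ?_
  intro q hqS hqB hqy
  have hqI0 : q ∈ I0 := by
    rcases hqS with h | h
    · exact absurd h hqy
    · exact h
  have : ¬ M.Indep (insert y (I0 \ {q})) := fun h => hqB ⟨hqI0, h⟩
  rw [← Set.insert_diff_singleton_comm (fun h => hqy h.symm : y ≠ q)]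
  exact this


/-- After swapping along a "triangular" system of exchanges, the old set is spanned. -/
lemma spanning_swap (L : List (α × α)) (I0 : Set α) (hI0 : M.Indep I0) (hfin : I0.Finite)
    (hmem : ∀ p ∈ L, p.2 ∈ I0 ∧ p.1 ∈ M.E ∧ p.1 ∉ I0 ∧ ¬M.Indep (insert p.1 I0) ∧
        M.Indep (insert p.1 (I0 \ {p.2})))
    (hpw : List.Pairwise (fun p q => ¬ M.Indep (insert p.1 (I0 \ {q.2}))) L) :
    I0 ⊆ M.closure ((I0 \ {a | ∃ p ∈ L, p.2 = a}) ∪ {a | ∃ p ∈ L, p.1 = a}) := by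
  induction L with
  | nil => simpa using M.subset_closure I0 hI0.subset_ground
  | cons hd L' ih =>
    obtain ⟨y, z⟩ := hd
    rw [List.pairwise_cons] at hpw
    obtain ⟨hhd, hpw'⟩ := hpw
    obtain ⟨hz, hyE, hy, hdep, hzind⟩ := hmem (y, z) List.mem_cons_self
    set Zs : Set α := {a | ∃ p ∈ L', p.2 = a} with hZs
    set Ys : Set α := {a | ∃ p ∈ L', p.1 = a} with hYs
    set J : Set α := (I0 \ ({a | ∃ p ∈ (y, z) :: L', p.2 = a})) ∪ {a | ∃ p ∈ (y, z) :: L', p.1 = a}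
      with hJ
    have hJ' : J = (I0 \ (Zs ∪ {z})) ∪ insert y Ys := by
      rw [hJ, hZs, hYs]
      ext a
      simp only [List.mem_cons, mem_setOf_eq, mem_union, mem_diff, mem_singleton_iff,
        mem_insert_iff, exists_eq_or_imp]
      constructor
      · rintro (⟨ha, hna⟩ | (hya | ⟨p, hp, hpa⟩))
        · push_neg at hna
          exact Or.inl ⟨ha, fun h => h.elim (fun ⟨p, hp, hpa⟩ => hna.2 p hp hpa)
            (fun h' => hna.1 h'.symm)⟩
        · exact Or.inr (Or.inl hya.symm)
        · exact Or.inr (Or.inr ⟨p, hp, hpa⟩)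
      · rintro (⟨ha, hna⟩ | (hay | ⟨p, hp, hpa⟩))
        · refine Or.inl ⟨ha, ?_⟩
          push_neg
          exact ⟨fun h => hna (Or.inr h.symm), fun p hp hpa => hna (Or.inl ⟨p, hp, hpa⟩)⟩
        · exact Or.inr (Or.inl hay.symm)
        · exact Or.inr (Or.inr ⟨p, hp, hpa⟩)
    -- z is spanned by J
    have hQ : Zs ⊆ I0 := by
      rintro a ⟨p, hp, rfl⟩
      exact (hmem p (List.mem_cons_of_mem _ hp)).1
    have hQdep : ∀ q ∈ Zs, ¬ M.Indep (insert y (I0 \ {q})) := by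
      rintro a ⟨p, hp, rfl⟩
      exact hhd p hp
    have hzJ : z ∈ M.closure J := by
      have := lemB hI0 hfin hyE hy hdep hz hzind hQ hQdep
      refine M.closure_subset_closure ?_ this
      rw [hJ']
      intro a ha
      rcases ha with rfl | ha
      · exact Or.inr (mem_insert _ _)
      · exact Or.inl (by rw [union_comm] at ha ⊢; exact ha)
    -- inductive hypothesis
    have hIH := ih (fun p hp => hmem p (List.mem_cons_of_mem _ hp)) hpw'
    have hsub : (I0 \ Zs) ∪ Ys ⊆ M.closure J := by
      have hJcl : J ⊆ M.closure J := M.subset_closure J (by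
        rw [hJ']
        refine union_subset (diff_subset.trans hI0.subset_ground) (insert_subset hyE ?_)
        rintro a ⟨p, hp, rfl⟩
        exact (hmem p (List.mem_cons_of_mem _ hp)).2.1)
      rintro a (⟨ha, haZ⟩ | ha)
      · by_cases haz : a = z
        · exact haz ▸ hzJ
        · refine hJcl ?_
          rw [hJ']
          exact Or.inl ⟨ha, by simp [haz, haZ]⟩
      · exact hJcl (by rw [hJ']; exact Or.inr (mem_insert_of_mem _ ha))
    calc I0 ⊆ M.closure ((I0 \ Zs) ∪ Ys) := hIH
    _ ⊆ M.closure J := Matroid.closure_subset_closure_of_subset_closure hsub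


lemma sum_ncard_le_ncard {k : ℕ} (f : Fin k → Set α) (S : Set α) (hS : S.Finite)
    (hsub : ∀ i, f i ⊆ S) (hdisj : ∀ i j, i ≠ j → Disjoint (f i) (f j)) :
    ∑ i : Fin k, (f i).ncard ≤ S.ncard := by
  classical
  have key : ∀ s : Finset (Fin k), (⋃ i ∈ s, f i).ncard = ∑ i ∈ s, (f i).ncard := by
    intro s
    induction s using Finset.induction_on with
    | empty => simp
    | @insert a s ha ih =>
      rw [Finset.sum_insert ha, ← ih, Finset.set_biUnion_insert]
      rw [Set.ncard_union_eq ?_ (hS.subset (hsub a)) (hS.subset ?_)]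
      · exact disjoint_iUnion_right.mpr fun i => disjoint_iUnion_right.mpr fun hi =>
          hdisj a i (fun h => ha (h ▸ hi))
      · exact iUnion_subset fun i => iUnion_subset fun _ => hsub i
  calc ∑ i : Fin k, (f i).ncard = (⋃ i ∈ (Finset.univ : Finset (Fin k)), f i).ncard :=
        (key Finset.univ).symm
    _ ≤ S.ncard := Set.ncard_le_ncard
        (iUnion_subset fun i => iUnion_subset fun _ => hsub i) hS

lemma exists_path {arc : α → α → Prop} {e v : α} (h : Relation.ReflTransGen arc e v) :
    ∃ (n : ℕ) (x : ℕ → α), x 0 = e ∧ (∀ t, t < n → arc (x t) (x (t+1))) ∧ x n = v := by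
  induction h with
  | refl => exact ⟨0, fun _ => e, rfl, fun t ht => absurd ht (by omega), rfl⟩
  | @tail b c hab hbc ih =>
    obtain ⟨n, x, h0, hstep, hend⟩ := ih
    refine ⟨n + 1, fun m => if m = n + 1 then c else x m, by simp [h0], ?_, by simp⟩
    intro t ht
    by_cases h1 : t = n
    · subst h1
      simp only [if_neg (by omega : ¬ t = t + 1), if_pos rfl, hend]
      exact hbc
    · simp only [if_neg (by omega : ¬ t = n + 1), if_neg (by omega : ¬ t + 1 = n + 1)]
      exact hstep t (by omega)


lemma augment_family (hfinE : M.E.Finite) {k : ℕ} (I : Fin k → Set α)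
    (hind : ∀ i, M.Indep (I i)) (hdisj : ∀ i j, i ≠ j → Disjoint (I i) (I j))
    {e : α} (he : e ∈ M.E) (heU : e ∉ ⋃ i, I i)
    (hcond : ∀ S, S ⊆ M.E → S.Nonempty → ∃ A, A ⊆ S ∧ M.Indep A ∧ S.ncard ≤ k * A.ncard) :
    ∃ J : Fin k → Set α, (∀ i, M.Indep (J i)) ∧ (∀ i j, i ≠ j → Disjoint (J i) (J j)) ∧
      (⋃ i, J i) = insert e (⋃ i, I i) := by
  classical
  have hIE : ∀ i, I i ⊆ M.E := fun i => (hind i).subset_ground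
  have hIfin : ∀ i, (I i).Finite := fun i => hfinE.subset (hIE i)
  have heI : ∀ i, e ∉ I i := fun i h => heU (mem_iUnion.mpr ⟨i, h⟩)
  set arc : α → α → Prop := fun u v => ∃ i, u ∉ I i ∧ ¬M.Indep (insert u (I i)) ∧ v ∈ I i ∧
    M.Indep (insert u (I i \ {v})) with harcdef
  set ins : α → Prop := fun u => ∃ i, u ∉ I i ∧ M.Indep (insert u (I i)) with hinsdef
  set R : Set α := {v | Relation.ReflTransGen arc e v} with hRdef
  have heR : e ∈ R := Relation.ReflTransGen.refl
  have hRsub : R ⊆ insert e (⋃ i, I i) := by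
    intro v hv
    rw [hRdef, mem_setOf_eq] at hv
    induction hv with
    | refl => exact mem_insert _ _
    | @tail b c hab hbc ih =>
      obtain ⟨i, _, _, hc, _⟩ := hbc
      exact mem_insert_of_mem _ (mem_iUnion.mpr ⟨i, hc⟩)
  have hRE : R ⊆ M.E := hRsub.trans (insert_subset he (iUnion_subset hIE))
  have hRfin : R.Finite := hfinE.subset hRE
  by_cases hcase : ∃ v ∈ R, ins v
  · obtain ⟨v0, hv0R, hv0ins⟩ := hcase
    rw [hRdef, mem_setOf_eq] at hv0R
    obtain ⟨n0, x0, hx00, hx0arc, hx0end⟩ := exists_path hv0R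
    have hPex : ∃ n : ℕ, ∃ x : ℕ → α, x 0 = e ∧ (∀ t, t < n → arc (x t) (x (t+1))) ∧
        ins (x n) := ⟨n0, x0, hx00, hx0arc, hx0end ▸ hv0ins⟩
    set n := Nat.find hPex with hndef
    obtain ⟨x, hx0, harcs, hinsn⟩ := Nat.find_spec hPex
    have hmin : ∀ m, m < n → ∀ x' : ℕ → α, x' 0 = e → (∀ t, t < m → arc (x' t) (x' (t+1))) →
        ¬ ins (x' m) := by
      intro m hm x' h1 h2 h3
      exact Nat.find_min hPex hm ⟨x', h1, h2, h3⟩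
    -- injectivity of the path
    have hinj : ∀ s t, s < t → t ≤ n → x s ≠ x t := by
      intro s t hst htn heq
      refine hmin (n - (t - s)) (by omega) (fun m => if m ≤ s then x m else x (m + (t - s)))
        (by simp [hx0]) ?_ ?_
      · intro m hm
        by_cases h1 : m + 1 ≤ s
        · simp only [if_pos (by omega : m ≤ s), if_pos h1]
          exact harcs m (by omega)
        · by_cases h2 : m ≤ s
          · simp only [if_pos h2, if_neg h1]
            rw [show m + 1 + (t - s) = t + 1 by omega, show m = s by omega, heq]
            exact harcs t (by omega)
          · simp only [if_neg h2, if_neg h1]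
            rw [show m + 1 + (t - s) = (m + (t - s)) + 1 by omega]
            exact harcs (m + (t - s)) (by omega)
      · by_cases h : n - (t - s) ≤ s
        · simp only [if_pos h]
          rw [show n - (t - s) = s by omega, heq, show t = n by omega]
          exact hinsn
        · simp only [if_neg h]
          rw [show n - (t - s) + (t - s) = n by omega]
          exact hinsn
    -- no shortcut arcs
    have hns : ∀ s t, s + 1 < t → t ≤ n → ¬ arc (x s) (x t) := by
      intro s t hst htn harc'
      refine hmin (n - (t - s - 1)) (by omega)
        (fun m => if m ≤ s then x m else x (m + (t - s - 1))) (by simp [hx0]) ?_ ?_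
      · intro m hm
        by_cases h1 : m + 1 ≤ s
        · simp only [if_pos (by omega : m ≤ s), if_pos h1]
          exact harcs m (by omega)
        · by_cases h2 : m ≤ s
          · simp only [if_pos h2, if_neg h1]
            rw [show m + 1 + (t - s - 1) = t by omega, show m = s by omega]
            exact harc'
          · simp only [if_neg h2, if_neg h1]
            rw [show m + 1 + (t - s - 1) = (m + (t - s - 1)) + 1 by omega]
            exact harcs (m + (t - s - 1)) (by omega)
      · simp only [if_neg (by omega : ¬ (n - (t - s - 1) ≤ s))]
        rw [show n - (t - s - 1) + (t - s - 1) = n by omega]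
        exact hinsn
    -- choose indices along the path
    obtain ⟨j, hjI, hjind⟩ := hinsn
    have hgex : ∀ t, ∃ i : Fin k, t < n → x t ∉ I i ∧ ¬M.Indep (insert (x t) (I i)) ∧
        x (t+1) ∈ I i ∧ M.Indep (insert (x t) (I i \ {x (t+1)})) := by
      intro t
      by_cases ht : t < n
      · obtain ⟨i, hi⟩ := harcs t ht
        exact ⟨i, fun _ => hi⟩
      · exact ⟨j, fun h => absurd h ht⟩
    choose g hg using hgex
    have hxE : ∀ t, t ≤ n → x t ∈ M.E := by
      intro t ht
      rcases Nat.eq_zero_or_pos t with h | h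
      · rw [h, hx0]; exact he
      · have := (hg (t - 1) (by omega)).2.2.1
        rw [show t - 1 + 1 = t by omega] at this
        exact hIE _ this
    set V : Set α := x '' {t | t ≤ n} with hVdef
    have hVfin : V.Finite := (Set.finite_le_nat n).image x
    set Y : Fin k → Set α := fun i => x '' {t | t < n ∧ g t = i} with hYdef
    set Z : Fin k → Set α := fun i => (fun t => x (t+1)) '' {t | t < n ∧ g t = i} with hZdef
    set K : Fin k → Set α := fun i => (I i \ V) ∪ Y i with hKdef
    set J : Fin k → Set α := fun i => if i = j then insert (x n) (K i) else K i with hJdef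
    -- membership of path points in the I's
    have hmemI : ∀ t i, t ≤ n → x t ∈ I i → 1 ≤ t ∧ g (t - 1) = i := by
      intro t i ht hti
      rcases Nat.eq_zero_or_pos t with h | h
      · rw [h, hx0] at hti
        exact absurd hti (heI i)
      · refine ⟨h, ?_⟩
        by_contra hgi
        have h1 := (hg (t - 1) (by omega)).2.2.1
        rw [show t - 1 + 1 = t by omega] at h1
        exact (hdisj _ _ hgi).ne_of_mem h1 hti rfl
    -- the swap lists
    have hL : ∀ i : Fin k, I i ⊆ M.closure (K i) := by
      intro i
      set L : List (α × α) :=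
        ((List.range n).filter (fun t => g t = i)).map (fun t => (x t, x (t+1))) with hLdef
      have hmemL : ∀ t, t ∈ (List.range n).filter (fun t => g t = i) → t < n ∧ g t = i := by
        intro t ht
        rw [List.mem_filter, List.mem_range] at ht
        exact ⟨ht.1, by simpa using ht.2⟩
      have hmem : ∀ p ∈ L, p.2 ∈ I i ∧ p.1 ∈ M.E ∧ p.1 ∉ I i ∧ ¬M.Indep (insert p.1 (I i)) ∧
          M.Indep (insert p.1 (I i \ {p.2})) := by
        intro p hp
        rw [hLdef, List.mem_map] at hp
        obtain ⟨t, ht, rfl⟩ := hp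
        obtain ⟨htn, hgt⟩ := hmemL t ht
        obtain ⟨h1, h2, h3, h4⟩ := hg t htn
        rw [hgt] at h1 h2 h3 h4
        exact ⟨h3, hxE t (by omega), h1, h2, h4⟩
      have hpw : List.Pairwise (fun p q => ¬ M.Indep (insert p.1 (I i \ {q.2}))) L := by
        rw [hLdef, List.pairwise_map]
        refine List.Pairwise.imp_of_mem ?_ ((List.pairwise_lt_range (n := n)).filter _)
        intro a b ha hb hab
        obtain ⟨han, hga⟩ := hmemL a ha
        obtain ⟨hbn, hgb⟩ := hmemL b hb
        intro hindep
        refine hns a (b + 1) (by omega) (by omega) ?_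
        refine ⟨i, ?_, ?_, ?_, hindep⟩
        · have := (hg a han).1; rwa [hga] at this
        · have := (hg a han).2.1; rwa [hga] at this
        · have := (hg b hbn).2.2.1; rwa [hgb] at this
      have hsw := spanning_swap L (I i) (hind i) (hIfin i) hmem hpw
      have hfst : {a | ∃ p ∈ L, p.1 = a} = Y i := by
        ext a
        simp only [hLdef, List.mem_map, List.mem_filter, List.mem_range, mem_setOf_eq,
          hYdef, mem_image, decide_eq_true_eq]
        constructor
        · rintro ⟨p, ⟨t, ⟨htn, hgt⟩, rfl⟩, rfl⟩
          exact ⟨t, ⟨htn, hgt⟩, rfl⟩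
        · rintro ⟨t, ⟨htn, hgt⟩, rfl⟩
          exact ⟨(x t, x (t+1)), ⟨t, ⟨htn, hgt⟩, rfl⟩, rfl⟩
      have hsnd : {a | ∃ p ∈ L, p.2 = a} = Z i := by
        ext a
        simp only [hLdef, List.mem_map, List.mem_filter, List.mem_range, mem_setOf_eq,
          hZdef, mem_image, decide_eq_true_eq]
        constructor
        · rintro ⟨p, ⟨t, ⟨htn, hgt⟩, rfl⟩, rfl⟩
          exact ⟨t, ⟨htn, hgt⟩, rfl⟩
        · rintro ⟨t, ⟨htn, hgt⟩, rfl⟩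
          exact ⟨(x t, x (t+1)), ⟨t, ⟨htn, hgt⟩, rfl⟩, rfl⟩
      rw [hfst, hsnd] at hsw
      have hIV : I i \ V = I i \ Z i := by
        ext a
        simp only [mem_diff, and_congr_right_iff]
        intro haI
        constructor
        · intro haV haZ
          refine haV ?_
          rw [hZdef] at haZ
          obtain ⟨t, ht, rfl⟩ := haZ
          have htn : t < n := ht.1
          exact ⟨t + 1, show t + 1 ≤ n by omega, rfl⟩
        · intro haZ haV
          rw [hVdef] at haV
          obtain ⟨t, htn', rfl⟩ := haV
          have htn : t ≤ n := htn'
          obtain ⟨ht1, hgt⟩ := hmemI t i htn haI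
          refine haZ ?_
          rw [hZdef]
          exact ⟨t - 1, show t - 1 < n ∧ g (t-1) = i from ⟨by omega, hgt⟩,
            show x (t - 1 + 1) = x t by rw [show t - 1 + 1 = t by omega]⟩
      rw [hKdef]
      dsimp only
      rw [hIV]
      exact hsw
    -- cardinalities
    have hYfin : ∀ i, (Y i).Finite := fun i =>
      ((Set.finite_lt_nat n).subset (sep_subset _ _)).image x
    have hTfin : (Set.finite_lt_nat n) = (Set.finite_lt_nat n) := rfl
    have hKfin : ∀ i, (K i).Finite := fun i => (((hIfin i).diff (t := V))).union (hYfin i)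
    have hKE : ∀ i, K i ⊆ M.E := by
      intro i
      refine union_subset (diff_subset.trans (hIE i)) ?_
      rintro a ⟨t, ⟨htn, _⟩, rfl⟩
      exact hxE t (by omega)
    have hKcard : ∀ i, (K i).ncard ≤ (I i).ncard := by
      intro i
      have hTfin' : {t | t < n ∧ g t = i}.Finite :=
        (Set.finite_lt_nat n).subset (fun t ht => ht.1)
      have hinjZ : Set.InjOn (fun t => x (t+1)) {t | t < n ∧ g t = i} := by
        intro a ha b hb hab
        obtain ⟨han, -⟩ := ha
        obtain ⟨hbn, -⟩ := hb
        by_contra hne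
        rcases Nat.lt_or_ge a b with h | h
        · exact hinj (a+1) (b+1) (by omega) (by omega : b + 1 ≤ n) hab
        · exact hinj (b+1) (a+1) (by omega) (by omega : a + 1 ≤ n) hab.symm
      have hZcard : (Z i).ncard = {t | t < n ∧ g t = i}.ncard := by
        rw [hZdef]
        exact Set.ncard_image_of_injOn hinjZ
      have hYcard : (Y i).ncard ≤ {t | t < n ∧ g t = i}.ncard := by
        rw [hYdef]
        exact Set.ncard_image_le hTfin'
      have hZsub : Z i ⊆ I i := by
        rintro a ⟨t, ⟨htn, hgt⟩, rfl⟩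
        have := (hg t htn).2.2.1
        rwa [hgt] at this
      have hZIcard : (Z i).ncard ≤ (I i).ncard := Set.ncard_le_ncard hZsub (hIfin i)
      have hIV : I i \ V = I i \ Z i := by
        ext a
        simp only [mem_diff, and_congr_right_iff]
        intro haI
        constructor
        · intro haV haZ
          refine haV ?_
          rw [hZdef] at haZ
          obtain ⟨t, ht, rfl⟩ := haZ
          have htn : t < n := ht.1
          exact ⟨t + 1, show t + 1 ≤ n by omega, rfl⟩
        · intro haZ haV
          rw [hVdef] at haV
          obtain ⟨t, htn', rfl⟩ := haV
          have htn : t ≤ n := htn'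
          obtain ⟨ht1, hgt⟩ := hmemI t i htn haI
          refine haZ ?_
          rw [hZdef]
          exact ⟨t - 1, show t - 1 < n ∧ g (t-1) = i from ⟨by omega, hgt⟩,
            show x (t - 1 + 1) = x t by rw [show t - 1 + 1 = t by omega]⟩
      have hdiffcard : (I i \ Z i).ncard = (I i).ncard - (Z i).ncard :=
        Set.ncard_diff hZsub (hTfin'.image _)
      calc (K i).ncard ≤ (I i \ V).ncard + (Y i).ncard := Set.ncard_union_le _ _
        _ = (I i).ncard - (Z i).ncard + (Y i).ncard := by rw [hIV, hdiffcard]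
        _ ≤ (I i).ncard := by omega
    have hKind : ∀ i, M.Indep (K i) := fun i =>
      indep_of_card_le_of_subset_closure (hind i) (hKE i) (hKfin i) (hL i) (hKcard i)
    -- independence of the new family
    have hxnV : x n ∈ V := ⟨n, show n ≤ n from le_rfl, rfl⟩
    have hxnK : x n ∉ K j := by
      rintro (⟨_, hnV⟩ | ⟨t, ⟨htn, _⟩, ht⟩)
      · exact hnV hxnV
      · exact hinj t n htn le_rfl ht
    have hJind : ∀ i, M.Indep (J i) := by
      intro i
      rw [hJdef]
      dsimp only
      by_cases hij : i = j
      · rw [if_pos hij, hij]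
        refine indep_of_card_le_of_subset_closure hjind
          (insert_subset (hxE n le_rfl) (hKE j)) ((hKfin j).insert _) ?_ ?_
        · refine insert_subset (M.subset_closure _
            (insert_subset (hxE n le_rfl) (hKE j)) (mem_insert _ _)) ?_
          exact (hL j).trans (M.closure_subset_closure (subset_insert _ _))
        · rw [Set.ncard_insert_of_notMem hjI (hIfin j)]
          have h1 := Set.ncard_insert_le (x n) (K j)
          have h2 := hKcard j
          omega
      · rw [if_neg hij]
        exact hKind i
    refine ⟨J, hJind, ?_, ?_⟩
    · -- disjointness
      have hJmem : ∀ i a, a ∈ J i →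
          (a ∈ I i ∧ a ∉ V) ∨ (∃ t, t < n ∧ g t = i ∧ x t = a) ∨ (i = j ∧ a = x n) := by
        intro i a ha
        rw [hJdef] at ha
        dsimp only at ha
        by_cases hij : i = j
        · rw [if_pos hij] at ha
          rcases ha with rfl | ha
          · exact Or.inr (Or.inr ⟨hij, rfl⟩)
          · rcases ha with ⟨h1, h2⟩ | ⟨t, ⟨htn, hgt⟩, rfl⟩
            · exact Or.inl ⟨h1, h2⟩
            · exact Or.inr (Or.inl ⟨t, htn, hgt, rfl⟩)
        · rw [if_neg hij] at ha
          rcases ha with ⟨h1, h2⟩ | ⟨t, ⟨htn, hgt⟩, rfl⟩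
          · exact Or.inl ⟨h1, h2⟩
          · exact Or.inr (Or.inl ⟨t, htn, hgt, rfl⟩)
      intro i i' hii'
      rw [Set.disjoint_left]
      intro a haJ haJ'
      rcases hJmem i a haJ with ⟨h1, h2⟩ | ⟨t, htn, hgt, rfl⟩ | ⟨rfl, rfl⟩
      · rcases hJmem i' a haJ' with ⟨h1', h2'⟩ | ⟨t, htn, hgt, rfl⟩ | ⟨rfl, rfl⟩
        · exact (hdisj i i' hii').ne_of_mem h1 h1' rfl
        · exact h2 ⟨t, show t ≤ n by omega, rfl⟩
        · exact h2 hxnV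
      · rcases hJmem i' _ haJ' with ⟨h1', h2'⟩ | ⟨t', htn', hgt', heq⟩ | ⟨rfl, heq⟩
        · exact h2' ⟨t, show t ≤ n by omega, rfl⟩
        · rcases Nat.lt_trichotomy t t' with h | h | h
          · exact hinj t t' h (by omega) heq.symm
          · exact hii' (hgt ▸ h ▸ hgt')
          · exact hinj t' t h (by omega) heq
        · exact hinj t n htn le_rfl heq
      · rcases hJmem i' _ haJ' with ⟨h1', h2'⟩ | ⟨t', htn', hgt', heq⟩ | ⟨rfl, heq⟩
        · exact h2' hxnV
        · exact hinj t' n htn' le_rfl heq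
        · exact hii' rfl
    · -- the union
      ext a
      simp only [mem_iUnion, mem_insert_iff]
      constructor
      · rintro ⟨i, hai⟩
        rw [hJdef] at hai
        dsimp only at hai
        have hK2U : a ∈ K i → a = e ∨ ∃ i', a ∈ I i' := by
          rintro (⟨h1, _⟩ | ⟨t, ⟨htn, _⟩, rfl⟩)
          · exact Or.inr ⟨i, h1⟩
          · rcases Nat.eq_zero_or_pos t with h | h
            · rw [h, hx0]; exact Or.inl rfl
            · have := (hg (t-1) (by omega)).2.2.1
              rw [show t - 1 + 1 = t by omega] at this
              exact Or.inr ⟨_, this⟩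
        by_cases hij : i = j
        · rw [if_pos hij] at hai
          rcases hai with rfl | hai
          · rcases Nat.eq_zero_or_pos n with h | h
            · rw [h, hx0]; exact Or.inl rfl
            · have := (hg (n-1) (by omega)).2.2.1
              rw [show n - 1 + 1 = n by omega] at this
              exact Or.inr ⟨_, this⟩
          · exact hK2U hai
        · rw [if_neg hij] at hai
          exact hK2U hai
      · have hKJ : ∀ i, K i ⊆ J i := by
          intro i
          rw [hJdef]
          dsimp only
          by_cases hij : i = j
          · rw [if_pos hij]; exact subset_insert _ _
          · rw [if_neg hij]
        rintro (rfl | ha)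
        · rcases Nat.eq_zero_or_pos n with h | h
          · refine ⟨j, ?_⟩
            rw [hJdef]
            dsimp only
            rw [if_pos rfl]
            rw [← hx0, show (0:ℕ) = n by omega]
            exact mem_insert _ _
          · refine ⟨g 0, hKJ _ (Or.inr ⟨0, ⟨h, rfl⟩, hx0⟩)⟩
        · obtain ⟨i, hai⟩ := ha
          by_cases haV : a ∈ V
          · obtain ⟨t, htn, rfl⟩ := haV
            have htn' : t ≤ n := htn
            rcases Nat.lt_or_ge t n with h | h
            · exact ⟨g t, hKJ _ (Or.inr ⟨t, ⟨h, rfl⟩, rfl⟩)⟩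
            · refine ⟨j, ?_⟩
              rw [hJdef]
              dsimp only
              rw [if_pos rfl, show t = n by omega]
              exact mem_insert _ _
          · exact ⟨i, hKJ _ (Or.inl ⟨hai, haV⟩)⟩
  · exfalso
    push_neg at hcase
    have hspan : ∀ i, R ⊆ M.closure (I i ∩ R) := by
      intro i v hv
      by_cases hvI : v ∈ I i
      · exact M.subset_closure _ (inter_subset_left.trans (hIE i)) ⟨hvI, hv⟩
      · have hdep : ¬ M.Indep (insert v (I i)) := fun hind' => hcase v hv ⟨i, hvI, hind'⟩
        have hcl := lemC (hind i) (hIfin i) (hRE hv) hvI hdep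
        refine M.closure_subset_closure ?_ hcl
        rintro a ⟨haI, hInd⟩
        refine ⟨haI, Relation.ReflTransGen.tail hv ⟨i, hvI, hdep, haI, hInd⟩⟩
    obtain ⟨A, hAR, hAind, hAcard⟩ := hcond R hRE ⟨e, heR⟩
    have hAle : ∀ i, A.ncard ≤ (I i ∩ R).ncard := fun i =>
      ncard_le_of_subset_closure hAind ((hind i).inter_right R) (hAR.trans (hspan i))
        ((hIfin i).subset inter_subset_left)
    have hsum : ∑ i : Fin k, (I i ∩ R).ncard ≤ (R \ {e}).ncard := by
      refine sum_ncard_le_ncard _ _ hRfin.diff ?_ ?_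
      · intro i a ⟨haI, haR⟩
        exact ⟨haR, fun h => heI i (h ▸ haI)⟩
      · intro i j hij
        exact ((hdisj i j hij).mono inter_subset_left inter_subset_left)
    have hconst : k * A.ncard ≤ ∑ i : Fin k, (I i ∩ R).ncard := by
      calc k * A.ncard = ∑ _i : Fin k, A.ncard := by
            rw [Finset.sum_const, Finset.card_univ, Fintype.card_fin, smul_eq_mul]
        _ ≤ _ := Finset.sum_le_sum fun i _ => hAle i
    have hR1 : 1 ≤ R.ncard := by
      exact Set.ncard_pos hRfin |>.mpr ⟨e, heR⟩
    have hdiff : (R \ {e}).ncard = R.ncard - 1 := by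
      rw [← Set.ncard_diff_singleton_add_one heR hRfin]
      omega
    omega


lemma cover (hfinE : M.E.Finite) {k : ℕ}
    (hcond : ∀ S, S ⊆ M.E → S.Nonempty → ∃ A, A ⊆ S ∧ M.Indep A ∧ S.ncard ≤ k * A.ncard) :
    ∃ f : Fin k → Set α, (∀ i, M.Indep (f i)) ∧ (⋃ i, f i) = M.E ∧
      ∀ i j, i ≠ j → Disjoint (f i) (f j) := by
  suffices h : ∀ (m : ℕ) (I : Fin k → Set α), (∀ i, M.Indep (I i)) →
      (∀ i j, i ≠ j → Disjoint (I i) (I j)) → (M.E \ ⋃ i, I i).ncard = m →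
      ∃ f : Fin k → Set α, (∀ i, M.Indep (f i)) ∧ (⋃ i, f i) = M.E ∧
        ∀ i j, i ≠ j → Disjoint (f i) (f j) by
    exact h _ (fun _ => ∅) (fun _ => M.empty_indep)
      (fun _ _ _ => disjoint_bot_left) rfl
  intro m
  induction m using Nat.strong_induction_on with
  | _ m ih =>
    intro I hind hdisj hm
    by_cases hU : (⋃ i, I i) = M.E
    · exact ⟨I, hind, hU, hdisj⟩
    · have hUE : (⋃ i, I i) ⊆ M.E := iUnion_subset fun i => (hind i).subset_ground
      have hne : (M.E \ ⋃ i, I i).Nonempty := by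
        rw [Set.diff_nonempty]
        exact fun h => hU (hUE.antisymm h)
      obtain ⟨e, heE, heU⟩ := hne
      obtain ⟨J, hJind, hJdisj, hJU⟩ := augment_family hfinE I hind hdisj heE heU hcond
      refine ih ((M.E \ ⋃ i, J i).ncard) ?_ J hJind hJdisj rfl
      rw [hJU, ← hm]
      have hrw : M.E \ insert e (⋃ i, I i) = (M.E \ ⋃ i, I i) \ {e} := by
        ext a
        simp only [mem_diff, mem_insert_iff, mem_singleton_iff]
        tauto
      rw [hrw]
      exact Set.ncard_diff_singleton_lt_of_mem ⟨heE, heU⟩ hfinE.diff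

end EdmondsAux

/-- Edmonds' matroid partitioning theorem. If `M` is a finite loopless matroid and
`k(M) = max_{∅ ≠ S ⊆ E} ⌈|S| / r(S)⌉` (where `r(S)` is the maximum size of an independent set
contained in `S`, and `⌈p/q⌉ = (p + q - 1)/q` in `ℕ`), then the ground set can be partitioned
into `k(M)` independent sets. -/
theorem edmonds_matroid_partition {α : Type} (M : Matroid α) (hfin : M.E.Finite)
    (hloopless : ∀ e ∈ M.E, M.Indep {e})
    (rank : Set α → ℕ)
    (hrank : ∀ S : Set α, rank S = sSup {m : ℕ | ∃ I ⊆ S, M.Indep I ∧ I.ncard = m})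
    (k : ℕ)
    (hk : k = sSup {m : ℕ | ∃ S ⊆ M.E, S.Nonempty ∧
      m = (S.ncard + rank S - 1) / rank S}) :
    ∃ f : Fin k → Set α,
      (∀ i, M.Indep (f i)) ∧
      (⋃ i, f i) = M.E ∧
      (∀ i j, i ≠ j → Disjoint (f i) (f j)) := by
  have hcond : ∀ S, S ⊆ M.E → S.Nonempty → ∃ A, A ⊆ S ∧ M.Indep A ∧ S.ncard ≤ k * A.ncard := by
    intro S hSE hSne
    have hSfin : S.Finite := hfin.subset hSE
    -- rank S is attained and positive
    have hbdd : ∀ T : Set α, T ⊆ M.E → BddAbove {m : ℕ | ∃ I ⊆ T, M.Indep I ∧ I.ncard = m} := by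
      intro T hTE
      refine ⟨T.ncard, ?_⟩
      rintro m ⟨I, hIT, _, rfl⟩
      exact Set.ncard_le_ncard hIT (hfin.subset hTE)
    have hrank_mem : ∀ T : Set α, T ⊆ M.E → T.Nonempty →
        (∃ A ⊆ T, M.Indep A ∧ A.ncard = rank T) ∧ 1 ≤ rank T ∧ rank T ≤ T.ncard := by
      intro T hTE hTne
      obtain ⟨a, ha⟩ := hTne
      have h1 : (1 : ℕ) ∈ {m : ℕ | ∃ I ⊆ T, M.Indep I ∧ I.ncard = m} :=
        ⟨{a}, singleton_subset_iff.mpr ha, hloopless a (hTE ha), Set.ncard_singleton a⟩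
      have hne : {m : ℕ | ∃ I ⊆ T, M.Indep I ∧ I.ncard = m}.Nonempty := ⟨1, h1⟩
      have hmem := Nat.sSup_mem hne (hbdd T hTE)
      rw [← hrank T] at hmem
      obtain ⟨A, hAT, hAind, hAcard⟩ := hmem
      have hle : 1 ≤ rank T := by
        rw [hrank T]
        exact le_csSup (hbdd T hTE) h1
      refine ⟨⟨A, hAT, hAind, hAcard⟩, hle, ?_⟩
      rw [← hAcard]
      exact Set.ncard_le_ncard hAT (hfin.subset hTE)
    obtain ⟨⟨A, hAS, hAind, hAcard⟩, hr1, hrS⟩ := hrank_mem S hSE hSne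
    -- k bounds the ceiling
    have hkmem : (S.ncard + rank S - 1) / rank S ≤ k := by
      rw [hk]
      refine le_csSup ⟨2 * M.E.ncard, ?_⟩ ⟨S, hSE, hSne, rfl⟩
      rintro m ⟨T, hTE, hTne, rfl⟩
      obtain ⟨-, h1, h2⟩ := hrank_mem T hTE hTne
      have h3 : T.ncard ≤ M.E.ncard := Set.ncard_le_ncard hTE hfin
      have := Nat.div_le_self (T.ncard + rank T - 1) (rank T)
      omega
    have hdiv : S.ncard + rank S - 1 < (k + 1) * rank S := by
      rw [← Nat.div_lt_iff_lt_mul (by omega : 0 < rank S)]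
      exact Nat.lt_succ_of_le hkmem
    have hSr : S.ncard ≤ k * rank S := by
      have h5 : S.ncard + rank S - 1 + 1 ≤ (k + 1) * rank S := Nat.succ_le_of_lt hdiv
      have h6 : S.ncard + rank S - 1 + 1 = S.ncard + rank S := by omega
      rw [h6, Nat.succ_mul] at h5
      exact Nat.le_of_add_le_add_right h5
    exact ⟨A, hAS, hAind, by rw [hAcard]; exact hSr⟩
  exact EdmondsAux.cover hfin hcond
end

section
/- Let H be an r-uniform hypergraph and let b be a positive integer. Form the bipartite graph B with parts U and V, where V = V(H), U contains exactly b vertices associated to each hyperedge of H, and u ∈ U is adjacent to v ∈ V if and only if v belongs to the hyperedge associated with u. Let I be the family of all subsets X ⊆ U such that (i) X contains at most r−1 vertices associated to each hyperedge, and (ii) for every nonempty X' ⊆ X, the neighbourhood of X' in B has size at least |X'|. Then (U, I) is a matroid, i.e., I contains the empty set, is closed under taking subsets, and satisfies the augmentation axiom: for all X, Y ∈ I with |X| < |Y| there exists y ∈ Y \ X with X ∪ {y} ∈ I. -/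
namespace HTM

variable {V : Type} [DecidableEq V] {r b : ℕ} {H : Finset (Finset V)}

/-- union of the edges of a family -/
def nu (F : Finset {e // e ∈ H}) : ℕ := (F.biUnion (fun e => (e : Finset V))).card

/-- capacity of a family -/
def mu (r : ℕ) (F : Finset {e // e ∈ H}) : ℕ := if F.card = 1 then r - 1 else nu F

/-- elements of `X` whose edge lies in `F` -/
def cut (X : Finset ({e // e ∈ H} × Fin b)) (F : Finset {e // e ∈ H}) :
    Finset ({e // e ∈ H} × Fin b) := X.filter (fun u => u.1 ∈ F)

def IndepC (r : ℕ) (X : Finset ({e // e ∈ H} × Fin b)) : Prop :=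
  (∀ e : {e // e ∈ H}, (X.filter (fun u => u.1 = e)).card ≤ r - 1) ∧
  (∀ X' ⊆ X, X'.Nonempty → X'.card ≤ (X'.biUnion (fun u => (u.1 : Finset V))).card)

def Tight (r : ℕ) (X : Finset ({e // e ∈ H} × Fin b)) (F : Finset {e // e ∈ H}) : Prop :=
  (cut X F).card = mu r F

lemma nu_mono {F G : Finset {e // e ∈ H}} (h : F ⊆ G) : nu F ≤ (nu G : ℕ) :=
  Finset.card_le_card (Finset.biUnion_subset_biUnion_of_subset_left _ h)

lemma mu_le_nu (hunif : ∀ e ∈ H, e.card = r) (F : Finset {e // e ∈ H}) :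
    mu r F ≤ nu F := by
  unfold mu
  split
  · next h =>
    obtain ⟨e, rfl⟩ := Finset.card_eq_one.mp h
    have : nu ({e} : Finset {e // e ∈ H}) = r := by
      simp [nu, hunif e.1 e.2]
    omega
  · exact le_rfl

lemma biUnion_union' {α β : Type*} [DecidableEq α] [DecidableEq β]
    (s t : Finset α) (f : α → Finset β) :
    (s ∪ t).biUnion f = s.biUnion f ∪ t.biUnion f := by
  ext v
  simp only [Finset.mem_biUnion, Finset.mem_union]
  constructor
  · rintro ⟨e, (he | he), hv⟩
    exacts [Or.inl ⟨e, he, hv⟩, Or.inr ⟨e, he, hv⟩]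
  · rintro (⟨e, he, hv⟩ | ⟨e, he, hv⟩)
    exacts [⟨e, Or.inl he, hv⟩, ⟨e, Or.inr he, hv⟩]

lemma cut_union (X : Finset ({e // e ∈ H} × Fin b)) (F G : Finset {e // e ∈ H}) :
    cut X (F ∪ G) = cut X F ∪ cut X G := by
  ext u; simp [cut, Finset.mem_filter, Finset.mem_union]; tauto

lemma cut_inter (X : Finset ({e // e ∈ H} × Fin b)) (F G : Finset {e // e ∈ H}) :
    cut X (F ∩ G) = cut X F ∩ cut X G := by
  ext u; simp [cut, Finset.mem_filter, Finset.mem_inter]; tauto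

lemma indep_cut_le (hunif : ∀ e ∈ H, e.card = r) {X : Finset ({e // e ∈ H} × Fin b)}
    (hX : IndepC r X) (F : Finset {e // e ∈ H}) : (cut X F).card ≤ mu r F := by
  unfold mu
  split
  · next h =>
    obtain ⟨e, rfl⟩ := Finset.card_eq_one.mp h
    have : cut X ({e} : Finset {e // e ∈ H}) = X.filter (fun u => u.1 = e) := by
      ext u; simp [cut]
    rw [this]
    exact hX.1 e
  · rcases (cut X F).eq_empty_or_nonempty with h | h
    · simp [h]
    · have h1 := hX.2 (cut X F) (Finset.filter_subset _ _) h
      refine h1.trans (Finset.card_le_card ?_)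
      intro v hv
      obtain ⟨u, hu, hvu⟩ := Finset.mem_biUnion.mp hv
      exact Finset.mem_biUnion.mpr ⟨u.1, (Finset.mem_filter.mp hu).2, hvu⟩

lemma tight_union (hunif : ∀ e ∈ H, e.card = r) {X : Finset ({e // e ∈ H} × Fin b)}
    (hX : IndepC r X) {F G : Finset {e // e ∈ H}}
    (hF : Tight r X F) (hG : Tight r X G) (hFG : (F ∩ G).Nonempty) :
    Tight r X (F ∪ G) := by
  by_cases hFsub : F ⊆ G
  · rwa [Finset.union_eq_right.mpr hFsub]
  by_cases hGsub : G ⊆ F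
  · rwa [Finset.union_eq_left.mpr hGsub]
  obtain ⟨x, hx⟩ := hFG
  have hxF := (Finset.mem_inter.mp hx).1
  have hxG := (Finset.mem_inter.mp hx).2
  have hF1 : F.card ≠ 1 := by
    intro h
    obtain ⟨e, rfl⟩ := Finset.card_eq_one.mp h
    exact hFsub (by simpa using (Finset.mem_singleton.mp hxF ▸ hxG))
  have hG1 : G.card ≠ 1 := by
    intro h
    obtain ⟨e, rfl⟩ := Finset.card_eq_one.mp h
    exact hGsub (by simpa using (Finset.mem_singleton.mp hxG ▸ hxF))
  have hU1 : (F ∪ G).card ≠ 1 := by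
    intro h
    have hFne : F.Nonempty := ⟨x, hxF⟩
    have h1 : 1 ≤ F.card := Finset.card_pos.mpr hFne
    have h2 : F.card ≤ (F ∪ G).card := Finset.card_le_card Finset.subset_union_left
    have : F.card = 1 := by omega
    exact hF1 this
  have muF : mu r F = nu F := by simp [mu, hF1]
  have muG : mu r G = nu G := by simp [mu, hG1]
  have muU : mu r (F ∪ G) = nu (F ∪ G) := by simp [mu, hU1]
  -- counting on cuts
  have key1 : (cut X (F ∪ G)).card + (cut X (F ∩ G)).card = (cut X F).card + (cut X G).card := by
    rw [cut_union, cut_inter]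
    exact Finset.card_union_add_card_inter _ _
  -- counting on vertex sets
  set A := F.biUnion (fun e => (e : Finset V)) with hA
  set B := G.biUnion (fun e => (e : Finset V)) with hB
  have key2 : nu F + nu G = nu (F ∪ G) + (A ∩ B).card := by
    have h := Finset.card_union_add_card_inter A B
    have hu : nu (F ∪ G) = (A ∪ B).card := by
      rw [nu, biUnion_union', hA, hB]
    have hf : nu F = A.card := rfl
    have hg : nu G = B.card := rfl
    omega
  have key3 : (cut X (F ∩ G)).card ≤ (A ∩ B).card := by
    refine (indep_cut_le hunif hX (F ∩ G)).trans ((mu_le_nu hunif _).trans ?_)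
    refine Finset.card_le_card ?_
    intro v hv
    obtain ⟨e, he, hve⟩ := Finset.mem_biUnion.mp hv
    exact Finset.mem_inter.mpr
      ⟨Finset.mem_biUnion.mpr ⟨e, (Finset.mem_inter.mp he).1, hve⟩,
       Finset.mem_biUnion.mpr ⟨e, (Finset.mem_inter.mp he).2, hve⟩⟩
  have hle : (cut X (F ∪ G)).card ≤ mu r (F ∪ G) := indep_cut_le hunif hX _
  unfold Tight at hF hG ⊢
  omega

lemma merge (hunif : ∀ e ∈ H, e.card = r) {X : Finset ({e // e ∈ H} × Fin b)}
    (hX : IndepC r X) :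
    ∀ n (𝔉 : Finset (Finset {e // e ∈ H})), 𝔉.card ≤ n → (∀ F ∈ 𝔉, Tight r X F) →
    ∃ 𝔊 : Finset (Finset {e // e ∈ H}),
      (∀ G ∈ 𝔊, Tight r X G) ∧
      (∀ G ∈ 𝔊, ∀ G' ∈ 𝔊, G ≠ G' → Disjoint G G') ∧
      𝔉.biUnion id ⊆ 𝔊.biUnion id := by
  intro n
  induction n with
  | zero =>
    intro 𝔉 hcard _
    have : 𝔉 = ∅ := Finset.card_eq_zero.mp (Nat.le_zero.mp hcard)
    subst this
    exact ⟨∅, by simp, by simp, by simp⟩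
  | succ n ih =>
    intro 𝔉 hcard htight
    by_cases hdisj : ∀ F ∈ 𝔉, ∀ G ∈ 𝔉, F ≠ G → Disjoint F G
    · exact ⟨𝔉, htight, hdisj, Finset.Subset.refl _⟩
    · push_neg at hdisj
      obtain ⟨F, hF, G, hG, hne, hnd⟩ := hdisj
      have hGmem : G ∈ 𝔉.erase F := Finset.mem_erase.mpr ⟨hne.symm, hG⟩
      set 𝔉' := insert (F ∪ G) ((𝔉.erase F).erase G) with h𝔉'
      have hcard2 : 2 ≤ 𝔉.card := Finset.one_lt_card.mpr ⟨F, hF, G, hG, hne⟩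
      have hcc : ((𝔉.erase F).erase G).card = 𝔉.card - 2 := by
        rw [Finset.card_erase_of_mem hGmem, Finset.card_erase_of_mem hF]
        omega
      have hcard' : 𝔉'.card ≤ n := by
        rw [h𝔉']
        have := Finset.card_insert_le (F ∪ G) ((𝔉.erase F).erase G)
        omega
      have htight' : ∀ F' ∈ 𝔉', Tight r X F' := by
        intro F' hF'
        rcases Finset.mem_insert.mp hF' with h | h
        · subst h
          exact tight_union hunif hX (htight F hF) (htight G hG)
            (Finset.not_disjoint_iff_nonempty_inter.mp hnd)
        · exact htight F' (Finset.mem_of_mem_erase (Finset.mem_of_mem_erase h))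
      obtain ⟨𝔊, h1, h2, h3⟩ := ih 𝔉' hcard' htight'
      refine ⟨𝔊, h1, h2, ?_⟩
      refine Finset.Subset.trans ?_ h3
      intro e he
      obtain ⟨F0, hF0, he0⟩ := Finset.mem_biUnion.mp he
      simp only [id] at he0
      by_cases h : F0 = F
      · exact Finset.mem_biUnion.mpr ⟨F ∪ G, Finset.mem_insert_self _ _,
          Finset.mem_union_left _ (h ▸ he0)⟩
      by_cases h' : F0 = G
      · exact Finset.mem_biUnion.mpr ⟨F ∪ G, Finset.mem_insert_self _ _,
          Finset.mem_union_right _ (h' ▸ he0)⟩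
      · exact Finset.mem_biUnion.mpr ⟨F0, Finset.mem_insert_of_mem
          (Finset.mem_erase.mpr ⟨h', Finset.mem_erase.mpr ⟨h, hF0⟩⟩), he0⟩

lemma counting (hunif : ∀ e ∈ H, e.card = r) {X Y : Finset ({e // e ∈ H} × Fin b)}
    (hX : IndepC r X) (hY : IndepC r Y) (𝔊 : Finset (Finset {e // e ∈ H}))
    (h1 : ∀ G ∈ 𝔊, Tight r X G)
    (h2 : ∀ G ∈ 𝔊, ∀ G' ∈ 𝔊, G ≠ G' → Disjoint G G')
    (hcov : ∀ u ∈ Y, u ∉ X → u.1 ∈ 𝔊.biUnion id) :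
    Y.card ≤ X.card := by
  set T := 𝔊.biUnion id with hT
  have hYsplit : (Y.filter (fun u => u.1 ∈ T)).card
      + (Y.filter (fun u => ¬ u.1 ∈ T)).card = Y.card :=
    Finset.card_filter_add_card_filter_not _
  have hXsplit : (X.filter (fun u => u.1 ∈ T)).card
      + (X.filter (fun u => ¬ u.1 ∈ T)).card = X.card :=
    Finset.card_filter_add_card_filter_not _
  have hout : Y.filter (fun u => ¬ u.1 ∈ T) ⊆ X.filter (fun u => ¬ u.1 ∈ T) := by
    intro u hu
    obtain ⟨huY, hnT⟩ := Finset.mem_filter.mp hu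
    refine Finset.mem_filter.mpr ⟨?_, hnT⟩
    by_contra huX
    exact hnT (hcov u huY huX)
  have hdY : ∀ G ∈ 𝔊, ∀ G' ∈ 𝔊, G ≠ G' → Disjoint (cut Y G) (cut Y G') := by
    intro G hG G' hG' hne
    rw [Finset.disjoint_left]
    intro u hu hu'
    exact Finset.disjoint_left.mp (h2 G hG G' hG' hne)
      (Finset.mem_filter.mp hu).2 (Finset.mem_filter.mp hu').2
  have hdX : ∀ G ∈ 𝔊, ∀ G' ∈ 𝔊, G ≠ G' → Disjoint (cut X G) (cut X G') := by
    intro G hG G' hG' hne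
    rw [Finset.disjoint_left]
    intro u hu hu'
    exact Finset.disjoint_left.mp (h2 G hG G' hG' hne)
      (Finset.mem_filter.mp hu).2 (Finset.mem_filter.mp hu').2
  have heY : Y.filter (fun u => u.1 ∈ T) = 𝔊.biUnion (fun G => cut Y G) := by
    ext u
    simp only [Finset.mem_filter, Finset.mem_biUnion, cut, hT, id]
    tauto
  have heX : X.filter (fun u => u.1 ∈ T) = 𝔊.biUnion (fun G => cut X G) := by
    ext u
    simp only [Finset.mem_filter, Finset.mem_biUnion, cut, hT, id]
    tauto
  have hin : (Y.filter (fun u => u.1 ∈ T)).card ≤ (X.filter (fun u => u.1 ∈ T)).card := by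
    rw [heY, heX, Finset.card_biUnion hdY, Finset.card_biUnion hdX]
    refine Finset.sum_le_sum ?_
    intro G hG
    calc (cut Y G).card ≤ mu r G := indep_cut_le hunif hY G
    _ = (cut X G).card := (h1 G hG).symm
  have := Finset.card_le_card hout
  omega

lemma blocked (hunif : ∀ e ∈ H, e.card = r) {X : Finset ({e // e ∈ H} × Fin b)}
    (hX : IndepC r X) (y : {e // e ∈ H} × Fin b) (hyX : y ∉ X)
    (hni : ¬ IndepC r (insert y X)) :
    ∃ F, Tight r X F ∧ y.1 ∈ F := by
  by_cases hcap : ∀ e : {e // e ∈ H}, ((insert y X).filter (fun u => u.1 = e)).card ≤ r - 1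
  · have hHall : ¬ ∀ X' ⊆ insert y X, X'.Nonempty →
        X'.card ≤ (X'.biUnion (fun u => (u.1 : Finset V))).card :=
      fun h => hni ⟨hcap, h⟩
    push_neg at hHall
    obtain ⟨X', hsub, hne, hlt⟩ := hHall
    have hyX' : y ∈ X' := by
      by_contra hy
      have hsub' : X' ⊆ X := by
        intro u hu
        rcases Finset.mem_insert.mp (hsub hu) with h | h
        · exact absurd (h ▸ hu) hy
        · exact h
      exact absurd (hX.2 X' hsub' hne) (by omega)
    set F := X'.image (fun u => u.1) with hF
    have hnuF : nu F = (X'.biUnion (fun u => (u.1 : Finset V))).card := by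
      rw [nu, hF]
      congr 1
      ext v
      simp [Finset.mem_biUnion]
    have hsub2 : X'.erase y ⊆ cut X F := by
      intro u hu
      obtain ⟨hne', huX'⟩ := Finset.mem_erase.mp hu
      refine Finset.mem_filter.mpr ⟨?_, Finset.mem_image.mpr ⟨u, huX', rfl⟩⟩
      rcases Finset.mem_insert.mp (hsub huX') with h | h
      · exact absurd h hne'
      · exact h
    have hcard1 : 1 ≤ X'.card := Finset.card_pos.mpr ⟨y, hyX'⟩
    have hcard2 : X'.card - 1 ≤ (cut X F).card := by
      have := Finset.card_le_card hsub2
      rwa [Finset.card_erase_of_mem hyX'] at this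
    have h1 := indep_cut_le hunif hX F
    have h2 := mu_le_nu hunif F
    refine ⟨F, by unfold Tight; omega, Finset.mem_image.mpr ⟨y, hyX', rfl⟩⟩
  · push_neg at hcap
    obtain ⟨e, hlt⟩ := hcap
    have he : y.1 = e := by
      by_contra hne
      rw [Finset.filter_insert, if_neg hne] at hlt
      exact absurd (hX.1 e) (by omega)
    have hfi : (insert y X).filter (fun u => u.1 = e) = insert y (X.filter (fun u => u.1 = e)) := by
      rw [Finset.filter_insert, if_pos he]
    have hcy : (insert y (X.filter (fun u => u.1 = e))).card
        = (X.filter (fun u => u.1 = e)).card + 1 :=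
      Finset.card_insert_of_notMem (fun h => hyX (Finset.mem_filter.mp h).1)
    rw [hfi, hcy] at hlt
    have hle := hX.1 e
    refine ⟨{e}, ?_, Finset.mem_singleton.mpr he⟩
    have hcut : cut X ({e} : Finset {e // e ∈ H}) = X.filter (fun u => u.1 = e) := by
      ext u; simp [cut]
    have hmu : mu r ({e} : Finset {e // e ∈ H}) = r - 1 := by simp [mu]
    unfold Tight
    rw [hcut, hmu]
    omega

end HTM

/-- the family `I` is the family of independent sets of a matroid. Here the ground
set is `U = H × Fin b` (with `b` elements associated to each hyperedge of the `r`-uniform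
hypergraph `H`), and `X ∈ I` iff `X` has at most `r-1` elements associated to each hyperedge
and every nonempty `X' ⊆ X` has at least `|X'|` neighbours in the bipartite incidence graph
(the neighbourhood of `X'` being the union of the corresponding hyperedges). -/
theorem hypergraph_transversal_matroid {V : Type} [DecidableEq V]
    (r b : ℕ) (hb : 0 < b)
    (H : Finset (Finset V)) (hunif : ∀ e ∈ H, e.card = r)
    (Indep : Finset ({e // e ∈ H} × Fin b) → Prop)
    (hIndep : ∀ X, Indep X ↔
      ((∀ e : {e // e ∈ H}, (X.filter (fun u => u.1 = e)).card ≤ r - 1) ∧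
       (∀ X' ⊆ X, X'.Nonempty →
          X'.card ≤ (X'.biUnion (fun u => (u.1 : Finset V))).card))) :
    Indep ∅ ∧
    (∀ X Y, X ⊆ Y → Indep Y → Indep X) ∧
    (∀ X Y, Indep X → Indep Y → X.card < Y.card →
      ∃ y ∈ Y \ X, Indep (insert y X)) := by
  have hC : ∀ X, Indep X ↔ HTM.IndepC r X := hIndep
  refine ⟨?_, ?_, ?_⟩
  · rw [hC]
    constructor
    · intro e; simp
    · intro X' hsub hne
      exact absurd (Finset.subset_empty.mp hsub) hne.ne_empty
  · intro X Y hXY hY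
    rw [hC] at hY ⊢
    constructor
    · intro e
      exact (Finset.card_le_card (Finset.filter_subset_filter _ hXY)).trans (hY.1 e)
    · intro X' hsub hne
      exact hY.2 X' (hsub.trans hXY) hne
  · intro X Y hXi hYi hcard
    rw [hC] at hXi hYi
    by_contra hcon
    push_neg at hcon
    have hblock : ∀ y ∈ Y \ X, ∃ F, HTM.Tight r X F ∧ y.1 ∈ F := by
      intro y hy
      refine HTM.blocked hunif hXi y (Finset.mem_sdiff.mp hy).2 ?_
      intro hI
      exact hcon y hy ((hC _).mpr hI)
    choose! f hf using hblock
    set 𝔉 : Finset (Finset {e // e ∈ H}) := (Y \ X).image f with h𝔉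
    have htight : ∀ F ∈ 𝔉, HTM.Tight r X F := by
      intro F hF
      obtain ⟨y, hy, rfl⟩ := Finset.mem_image.mp hF
      exact (hf y hy).1
    obtain ⟨𝔊, h1, h2, h3⟩ := HTM.merge hunif hXi 𝔉.card 𝔉 le_rfl htight
    have hcov : ∀ u ∈ Y, u ∉ X → u.1 ∈ 𝔊.biUnion id := by
      intro u huY hunX
      have hu : u ∈ Y \ X := Finset.mem_sdiff.mpr ⟨huY, hunX⟩
      refine h3 ?_
      exact Finset.mem_biUnion.mpr ⟨f u, Finset.mem_image.mpr ⟨u, hu, rfl⟩, (hf u hu).2⟩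
    have := HTM.counting hunif hXi hYi 𝔊 h1 h2 hcov
    omega
end

section
/- Let H be an r-uniform hypergraph with maximal density m(H) ≤ a/b, where a, b are positive integers with b > r−1 and a > b/(r−1). Form the bipartite graph B with parts U and V, where V = V(H), U contains exactly b vertices associated to each hyperedge of H, and u ∈ U is adjacent to v ∈ V if and only if v belongs to the hyperedge associated with u. Let I be the family of all subsets X ⊆ U that contain at most r−1 vertices associated to each hyperedge and satisfy Hall's condition in B (every nonempty X' ⊆ X has at least |X'| neighbours in V). Then U can be partitioned into a sets U₁, …, U_a, each belonging to I. -/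
/-- if `H` is `r`-uniform with maximal density `m(H) ≤ a/b`, where `b > r-1` and
`a > b/(r-1)`, then the ground set `U = H × Fin b` (with `b` elements per hyperedge) can be
partitioned into `a` sets each of which is independent, i.e.\ contains at most `r-1` elements
associated to each hyperedge and satisfies Hall's condition in the bipartite incidence graph. -/
theorem hypergraph_ground_set_partition {V : Type} [DecidableEq V]
    (r a b : ℕ) (ha : 0 < a) (hb : 0 < b)
    (H : Finset (Finset V)) (hunif : ∀ e ∈ H, e.card = r)
    (hbr : r - 1 < b)
    (hab : b < a * (r - 1))
    (hdens : ∀ S : Finset V, S.Nonempty →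
      (H.filter (fun e => e ⊆ S)).card * b ≤ a * S.card)
    (Indep : Finset ({e // e ∈ H} × Fin b) → Prop)
    (hIndep : ∀ X, Indep X ↔
      ((∀ e : {e // e ∈ H}, (X.filter (fun u => u.1 = e)).card ≤ r - 1) ∧
       (∀ X' ⊆ X, X'.Nonempty →
          X'.card ≤ (X'.biUnion (fun u => (u.1 : Finset V))).card))) :
    ∃ f : {e // e ∈ H} × Fin b → Fin a,
      ∀ i : Fin a, Indep (Finset.univ.filter (fun u => f u = i)) := by
  classical
  have hr1 : 0 < r - 1 := by
    rcases Nat.eq_zero_or_pos (r - 1) with h | h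
    · simp [h] at hab
    · exact h
  have hble : b ≤ a * (r - 1) := le_of_lt hab
  set D := a * (r - 1) - b with hD
  -- edges are nonempty
  have hene : ∀ e : {e // e ∈ H}, (e : Finset V).Nonempty := by
    intro e
    rw [← Finset.card_pos, hunif e e.2]
    omega
  -- slot type and target type
  set ι := ({e // e ∈ H} × Fin a × Fin (r - 1))
  set α := Sum (V × Fin a) ({e // e ∈ H} × Fin D) with hα
  set t : ι → Finset α := fun x =>
    ((x.1 : Finset V).image fun v => Sum.inl (v, x.2.1)) ∪
      ((Finset.univ : Finset (Fin D)).image fun d => Sum.inr (x.1, d)) with ht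
  -- Hall's condition
  have hall : ∀ s : Finset ι, s.card ≤ (s.biUnion t).card := by
    intro s
    set E' : Finset {e // e ∈ H} := s.image Prod.fst with hE'
    set Ei : Fin a → Finset {e // e ∈ H} :=
      fun i => (s.filter fun x => x.2.1 = i).image Prod.fst with hEi
    set Si : Fin a → Finset V := fun i => (Ei i).biUnion (fun e => (e : Finset V)) with hSi
    -- step A : s.card ≤ ∑ i, (r-1) * (Ei i).card
    have stepA : s.card ≤ ∑ i : Fin a, (r - 1) * (Ei i).card := by
      have h1 : s.card = ∑ i : Fin a, (s.filter fun x => x.2.1 = i).card := by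
        exact Finset.card_eq_sum_card_fiberwise (fun x _ => Finset.mem_univ x.2.1)
      rw [h1]
      apply Finset.sum_le_sum
      intro i _
      have : (s.filter fun x => x.2.1 = i).card ≤ ((Ei i) ×ˢ (Finset.univ : Finset (Fin (r-1)))).card := by
        apply Finset.card_le_card_of_injOn (fun x => (x.1, x.2.2))
        · intro x hx
          rw [Finset.mem_coe, Finset.mem_product]
          exact ⟨Finset.mem_image_of_mem _ hx, Finset.mem_univ _⟩
        · intro x hx y hy hxy
          simp only [Finset.coe_filter, Set.mem_setOf_eq] at hx hy
          have hxy' : (x.1, x.2.2) = (y.1, y.2.2) := hxy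
          obtain ⟨h1, h2⟩ := Prod.mk.inj hxy'
          have h3 : x.2.1 = y.2.1 := by rw [hx.2, hy.2]
          exact Prod.ext h1 (Prod.ext h3 h2)
      rwa [Finset.card_product, Finset.card_univ, Fintype.card_fin, mul_comm] at this
    -- density per color
    have hdens' : ∀ i : Fin a, b * (Ei i).card ≤ a * (Si i).card := by
      intro i
      rcases Finset.eq_empty_or_nonempty (Ei i) with h | h
      · simp [h]
      · obtain ⟨e0, he0⟩ := h
        have hSne : (Si i).Nonempty := by
          obtain ⟨v, hv⟩ := hene e0
          exact ⟨v, Finset.mem_biUnion.2 ⟨e0, he0, hv⟩⟩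
        have hsub : (Ei i).image Subtype.val ⊆ H.filter (fun e => e ⊆ Si i) := by
          intro e he
          rw [Finset.mem_image] at he
          obtain ⟨e', he', rfl⟩ := he
          rw [Finset.mem_filter]
          exact ⟨e'.2, Finset.subset_biUnion_of_mem _ he'⟩
        have hcard : (Ei i).card ≤ (H.filter (fun e => e ⊆ Si i)).card := by
          calc (Ei i).card = ((Ei i).image Subtype.val).card := by
                rw [Finset.card_image_of_injective _ Subtype.val_injective]
            _ ≤ _ := Finset.card_le_card hsub
        calc b * (Ei i).card ≤ b * (H.filter (fun e => e ⊆ Si i)).card :=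
              Nat.mul_le_mul_left _ hcard
          _ = (H.filter (fun e => e ⊆ Si i)).card * b := mul_comm _ _
          _ ≤ a * (Si i).card := hdens _ hSne
    have hEiE' : ∀ i : Fin a, (Ei i).card ≤ E'.card := by
      intro i
      exact Finset.card_le_card (Finset.image_subset_image (Finset.filter_subset _ _))
    -- step B
    have stepB : ∑ i : Fin a, (r - 1) * (Ei i).card ≤
        (∑ i : Fin a, (Si i).card) + D * E'.card := by
      have key : a * (∑ i : Fin a, (r - 1) * (Ei i).card) ≤
          a * ((∑ i : Fin a, (Si i).card) + D * E'.card) := by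
        rw [Finset.mul_sum]
        have h1 : ∀ i : Fin a, a * ((r - 1) * (Ei i).card) ≤ D * E'.card + a * (Si i).card := by
          intro i
          have : a * ((r - 1) * (Ei i).card) = D * (Ei i).card + b * (Ei i).card := by
            rw [← add_mul, hD, Nat.sub_add_cancel hble, ← mul_assoc]
          rw [this]
          exact Nat.add_le_add (Nat.mul_le_mul_left _ (hEiE' i)) (hdens' i)
        calc ∑ i : Fin a, a * ((r - 1) * (Ei i).card)
            ≤ ∑ i : Fin a, (D * E'.card + a * (Si i).card) := Finset.sum_le_sum (fun i _ => h1 i)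
          _ = a * (D * E'.card) + ∑ i : Fin a, a * (Si i).card := by
              rw [Finset.sum_add_distrib, Finset.sum_const, Finset.card_univ, Fintype.card_fin,
                smul_eq_mul]
          _ = a * ((∑ i : Fin a, (Si i).card) + D * E'.card) := by
              rw [mul_add, Finset.mul_sum, add_comm]
      exact Nat.le_of_mul_le_mul_left key ha
    -- step C
    have stepC : (∑ i : Fin a, (Si i).card) + D * E'.card ≤ (s.biUnion t).card := by
      set B1 : Finset α := Finset.univ.biUnion
        (fun i : Fin a => (Si i).image (fun v => Sum.inl (v, i))) with hB1
      set B2 : Finset α := E'.biUnion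
        (fun e => (Finset.univ : Finset (Fin D)).image (fun d => Sum.inr (e, d))) with hB2
      have hB1card : B1.card = ∑ i : Fin a, (Si i).card := by
        rw [hB1, Finset.card_biUnion]
        · apply Finset.sum_congr rfl
          intro i _
          apply Finset.card_image_of_injective
          intro v w hvw
          exact (Prod.mk.injEq .. ▸ (Sum.inl.inj hvw)).1
        · intro i _ j _ hij
          simp only [Finset.disjoint_left, Finset.mem_image]
          rintro x ⟨v, _, rfl⟩ ⟨w, _, hw⟩
          exact hij ((Prod.mk.injEq .. ▸ (Sum.inl.inj hw)).2).symm
      have hB2card : B2.card = E'.card * D := by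
        rw [hB2, Finset.card_biUnion]
        · rw [Finset.sum_congr rfl (fun e _ => ?_), Finset.sum_const, smul_eq_mul]
          rw [Finset.card_image_of_injective, Finset.card_univ, Fintype.card_fin]
          intro v w hvw
          exact (Prod.mk.injEq .. ▸ (Sum.inr.inj hvw)).2
        · intro e _ e' _ hee
          simp only [Finset.disjoint_left, Finset.mem_image]
          rintro x ⟨v, _, rfl⟩ ⟨w, _, hw⟩
          exact hee ((Prod.mk.injEq .. ▸ (Sum.inr.inj hw)).1).symm
      have hdisj : Disjoint B1 B2 := by
        simp only [Finset.disjoint_left, hB1, hB2, Finset.mem_biUnion, Finset.mem_image]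
        rintro x ⟨i, _, v, _, rfl⟩ ⟨e, _, d, _, hd⟩
        exact Sum.inl_ne_inr hd.symm
      have hsub : B1 ∪ B2 ⊆ s.biUnion t := by
        intro x hx
        rcases Finset.mem_union.1 hx with hx | hx
        · rw [hB1, Finset.mem_biUnion] at hx
          obtain ⟨i, _, hx⟩ := hx
          rw [Finset.mem_image] at hx
          obtain ⟨v, hv, rfl⟩ := hx
          rw [hSi, Finset.mem_biUnion] at hv
          obtain ⟨e, he, hv⟩ := hv
          rw [hEi, Finset.mem_image] at he
          obtain ⟨y, hy, hy1⟩ := he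
          rw [Finset.mem_filter] at hy
          refine Finset.mem_biUnion.2 ⟨y, hy.1, ?_⟩
          rw [ht]
          apply Finset.mem_union_left
          rw [Finset.mem_image]
          exact ⟨v, hy1 ▸ hv, by rw [hy.2]⟩
        · rw [hB2, Finset.mem_biUnion] at hx
          obtain ⟨e, he, hx⟩ := hx
          rw [Finset.mem_image] at hx
          obtain ⟨d, _, rfl⟩ := hx
          rw [hE', Finset.mem_image] at he
          obtain ⟨y, hy, rfl⟩ := he
          refine Finset.mem_biUnion.2 ⟨y, hy, ?_⟩
          rw [ht]
          apply Finset.mem_union_right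
          rw [Finset.mem_image]
          exact ⟨d, Finset.mem_univ _, rfl⟩
      calc (∑ i : Fin a, (Si i).card) + D * E'.card = B1.card + B2.card := by
            rw [hB1card, hB2card, mul_comm]
        _ = (B1 ∪ B2).card := (Finset.card_union_of_disjoint hdisj).symm
        _ ≤ (s.biUnion t).card := Finset.card_le_card hsub
    exact le_trans stepA (le_trans stepB stepC)
  obtain ⟨M, hMinj, hMmem⟩ := (Finset.all_card_le_biUnion_card_iff_exists_injective t).1 hall
  -- real slots
  set RS : {e // e ∈ H} → Finset (Fin a × Fin (r - 1)) :=
    fun e => Finset.univ.filter (fun p => (M (e, p)).isLeft) with hRS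
  have hRScard : ∀ e, b ≤ (RS e).card := by
    intro e
    have hbad : (Finset.univ.filter (fun p : Fin a × Fin (r-1) => ¬ (M (e, p)).isLeft)).card ≤ D := by
      have hex : ∀ p : Fin a × Fin (r-1), ¬ (M (e, p)).isLeft → ∃ d : Fin D, M (e, p) = Sum.inr (e, d) := by
        intro p hp
        have := hMmem (e, p)
        rw [ht] at this
        rcases Finset.mem_union.1 this with h | h
        · rw [Finset.mem_image] at h
          obtain ⟨v, _, hv⟩ := h
          rw [← hv] at hp
          simp at hp
        · rw [Finset.mem_image] at h
          obtain ⟨d, _, hd⟩ := h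
          exact ⟨d, hd.symm⟩
      have : ∀ p ∈ Finset.univ.filter (fun p : Fin a × Fin (r-1) => ¬ (M (e, p)).isLeft),
          ∃ d : Fin D, M (e, p) = Sum.inr (e, d) := by
        intro p hp
        exact hex p (Finset.mem_filter.1 hp).2
      rcases Nat.eq_zero_or_pos D with hD0 | hD0
      · have hall : ∀ p : Fin a × Fin (r-1), (M (e, p)).isLeft := by
          intro p
          by_contra hp
          obtain ⟨d, _⟩ := hex p hp
          exact absurd d.2 (by omega)
        have : (Finset.univ.filter (fun p : Fin a × Fin (r-1) => ¬ (M (e, p)).isLeft)) = ∅ := by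
          apply Finset.filter_eq_empty_iff.2
          intro p _
          simp [hall p]
        rw [this]
        simp
      · have hne : Nonempty (Fin D) := ⟨⟨0, hD0⟩⟩
        have hex2 : ∀ p : Fin a × Fin (r-1), ∃ d : Fin D,
            ¬ (M (e, p)).isLeft → M (e, p) = Sum.inr (e, d) := by
          intro p
          by_cases hp : (M (e, p)).isLeft
          · exact ⟨Classical.arbitrary _, fun h => absurd hp h⟩
          · obtain ⟨d, hd⟩ := hex p hp
            exact ⟨d, fun _ => hd⟩
        choose dd hdd using hex2
        calc (Finset.univ.filter (fun p : Fin a × Fin (r-1) => ¬ (M (e, p)).isLeft)).card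
            ≤ (Finset.univ : Finset (Fin D)).card := by
              apply Finset.card_le_card_of_injOn dd
              · intro p hp; exact Finset.mem_univ _
              · intro p hp q hq hpq
                simp only [Finset.mem_coe, Finset.mem_filter] at hp hq
                have : M (e, p) = M (e, q) := by
                  rw [hdd p hp.2, hdd q hq.2, hpq]
                have := hMinj this
                exact (Prod.mk.injEq .. ▸ this).2
          _ = D := by rw [Finset.card_univ, Fintype.card_fin]
    have htot : (RS e).card +
        (Finset.univ.filter (fun p : Fin a × Fin (r-1) => ¬ (M (e, p)).isLeft)).card = a * (r - 1) := by
      rw [hRS]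
      rw [Finset.card_filter_add_card_filter_not]
      rw [Finset.card_univ, Fintype.card_prod, Fintype.card_fin, Fintype.card_fin]
    omega
  -- choose b slots per edge
  set σ : (e : {e // e ∈ H}) → Fin b → Fin a × Fin (r - 1) :=
    fun e j => (RS e).toList.get ⟨j, by rw [Finset.length_toList]; exact lt_of_lt_of_le j.2 (hRScard e)⟩
    with hσ
  have hσmem : ∀ e j, σ e j ∈ RS e := by
    intro e j
    rw [← Finset.mem_toList]
    exact List.get_mem _ _
  have hσinj : ∀ e, Function.Injective (σ e) := by
    intro e j j' h
    have hnd := Finset.nodup_toList (RS e)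
    have h2 := List.nodup_iff_injective_get.1 hnd h
    injection h2 with h3
    exact Fin.ext h3
  set F : {e // e ∈ H} × Fin b → Fin a := fun u => (σ u.1 u.2).1 with hF
  refine ⟨F, ?_⟩
  intro i
  rw [hIndep]
  constructor
  · -- at most r-1 per edge
    intro e0
    have : ((Finset.univ.filter (fun u => F u = i)).filter
        (fun u => u.1 = e0)).card ≤ (Finset.univ : Finset (Fin (r-1))).card := by
      apply Finset.card_le_card_of_injOn (fun u => (σ u.1 u.2).2)
      · intro u _; exact Finset.mem_univ _
      · intro u hu u' hu' huu
        have hu1 := Finset.mem_filter.1 (Finset.mem_coe.1 hu)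
        have hu1' := Finset.mem_filter.1 (Finset.mem_coe.1 hu')
        have hu2 := Finset.mem_filter.1 hu1.1
        have hu2' := Finset.mem_filter.1 hu1'.1
        have he : u.1 = u'.1 := by rw [hu1.2, hu1'.2]
        have h1 : (σ u.1 u.2).1 = (σ u'.1 u'.2).1 := by
          have hFeq : F u = F u' := by rw [hu2.2, hu2'.2]
          rw [hF] at hFeq
          exact hFeq
        have hs : σ u.1 u.2 = σ u'.1 u'.2 := Prod.ext h1 huu
        rw [he] at hs
        exact Prod.ext he (hσinj u'.1 hs)
    rwa [Finset.card_univ, Fintype.card_fin] at this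
  · -- Hall's condition within the class
    intro X' hX' hne
    have hclass : ∀ u ∈ X', (σ u.1 u.2).1 = i := by
      intro u hu
      exact (Finset.mem_filter.1 (hX' hu)).2
    have key : ∀ u, u ∈ X' → ∃ v : V, v ∈ (u.1 : Finset V) ∧
        M (u.1, σ u.1 u.2) = Sum.inl (v, i) := by
      intro u hu
      have hleft : (M (u.1, σ u.1 u.2)).isLeft := (Finset.mem_filter.1 (hσmem u.1 u.2)).2
      have hmem := hMmem (u.1, σ u.1 u.2)
      rw [ht] at hmem
      rcases Finset.mem_union.1 hmem with h | h
      · rw [Finset.mem_image] at h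
        obtain ⟨v, hv, hv2⟩ := h
        refine ⟨v, hv, ?_⟩
        rw [← hv2]
        congr 1
        exact congrArg (Prod.mk v) (hclass u hu)
      · rw [Finset.mem_image] at h
        obtain ⟨d, _, hd⟩ := h
        rw [← hd] at hleft
        simp at hleft
      -- done
    obtain ⟨u0, hu0⟩ := hne
    obtain ⟨v0, hv0⟩ := hene u0.1
    have key' : ∀ u, ∃ v : V, u ∈ X' → (v ∈ (u.1 : Finset V) ∧
        M (u.1, σ u.1 u.2) = Sum.inl (v, i)) := by
      intro u
      by_cases hu : u ∈ X'
      · obtain ⟨v, hv⟩ := key u hu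
        exact ⟨v, fun _ => hv⟩
      · exact ⟨v0, fun h => absurd h hu⟩
    choose w hw using key'
    apply Finset.card_le_card_of_injOn w
    · intro u hu
      exact Finset.mem_biUnion.2 ⟨u, hu, (hw u hu).1⟩
    · intro u hu u' hu' huu
      simp only [Finset.mem_coe] at hu hu'
      have h1 := (hw u hu).2
      have h2 := (hw u' hu').2
      have : M (u.1, σ u.1 u.2) = M (u'.1, σ u'.1 u'.2) := by
        rw [h1, h2, huu]
      have heq := hMinj this
      have he : u.1 = u'.1 := (Prod.mk.injEq .. ▸ heq).1
      have hs : σ u.1 u.2 = σ u'.1 u'.2 := (Prod.mk.injEq .. ▸ heq).2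
      rw [he] at hs
      exact Prod.ext he (hσinj u'.1 hs)
end

section
/- Let H be an r-uniform hypergraph with maximal density m(H) ≤ a/b, where a, b are positive integers with b > r−1 and a > b/(r−1). Form the bipartite graph B with parts U and V as follows: V = V(H), U contains exactly b vertices associated to each hyperedge of H, and u ∈ U is adjacent to v ∈ V if and only if v belongs to the hyperedge associated with u. For Z ⊆ U, let r(Z) denote the maximum size of a subset X ⊆ Z that contains at most r−1 vertices associated to each hyperedge and satisfies Hall's condition in B (every nonempty X' ⊆ X has at least |X'| neighbours in V). Then for every nonempty Z ⊆ U, we have |Z| ≤ a · r(Z). -/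
/-- if `H` is `r`-uniform with maximal density `m(H) ≤ a/b`, where `b > r-1` and
`a > b/(r-1)`, then for every nonempty subset `Z` of the ground set `U = H × Fin b` we have
`|Z| ≤ a·r(Z)`, where `r(Z)` is the maximum size of a subset `X ⊆ Z` containing at most `r-1`
elements per hyperedge and satisfying Hall's condition in the bipartite incidence graph. -/
theorem hypergraph_rank_bound {V : Type} [DecidableEq V]
    (r a b : ℕ) (ha : 0 < a) (hb : 0 < b)
    (H : Finset (Finset V)) (hunif : ∀ e ∈ H, e.card = r)
    (hbr : r - 1 < b)
    (hab : b < a * (r - 1))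
    (hdens : ∀ S : Finset V, S.Nonempty →
      (H.filter (fun e => e ⊆ S)).card * b ≤ a * S.card)
    (Indep : Finset ({e // e ∈ H} × Fin b) → Prop)
    (hIndep : ∀ X, Indep X ↔
      ((∀ e : {e // e ∈ H}, (X.filter (fun u => u.1 = e)).card ≤ r - 1) ∧
       (∀ X' ⊆ X, X'.Nonempty →
          X'.card ≤ (X'.biUnion (fun u => (u.1 : Finset V))).card))) :
    ∀ Z : Finset ({e // e ∈ H} × Fin b), Z.Nonempty →
      Z.card ≤ a * sSup {m : ℕ | ∃ X ⊆ Z, Indep X ∧ X.card = m} := by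
  classical
  intro Z hZ
  set N : Finset ({e // e ∈ H} × Fin b) → Finset V :=
    fun X => X.biUnion (fun u => (u.1 : Finset V)) with hNdef
  have hr1 : 1 ≤ r - 1 := by
    rcases Nat.eq_zero_or_pos (r - 1) with h | h
    · rw [h, mul_zero] at hab; omega
    · exact h
  have hr2 : 2 ≤ r := by omega
  -- the sSup set
  set S : Set ℕ := {m : ℕ | ∃ X ⊆ Z, Indep X ∧ X.card = m} with hSdef
  have hS0 : (0 : ℕ) ∈ S := by
    refine ⟨∅, Finset.empty_subset _, ?_, Finset.card_empty⟩
    rw [hIndep]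
    constructor
    · intro e; simp
    · intro X' hX' hne
      exact absurd (Finset.subset_empty.mp hX') (Finset.nonempty_iff_ne_empty.mp hne)
  have hSbdd : BddAbove S := by
    refine ⟨Z.card, ?_⟩
    rintro m ⟨X, hXZ, _, rfl⟩
    exact Finset.card_le_card hXZ
  have hSmem : sSup S ∈ S := Nat.sSup_mem ⟨0, hS0⟩ hSbdd
  obtain ⟨X, hXZ, hXind, hXcard⟩ := hSmem
  obtain ⟨hcap, hHall⟩ := (hIndep X).mp hXind
  -- maximality of X
  have hmax : ∀ z ∈ Z, z ∉ X → ¬ Indep (insert z X) := by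
    intro z hzZ hzX hind
    have hmem : (insert z X).card ∈ S :=
      ⟨insert z X, Finset.insert_subset hzZ hXZ, hind, rfl⟩
    have := le_csSup hSbdd hmem
    rw [Finset.card_insert_of_notMem hzX, hXcard] at this
    omega
  -- tight sets are closed under union
  have tight_union : ∀ Y1 ⊆ X, ∀ Y2 ⊆ X, Y1.card = (N Y1).card → Y2.card = (N Y2).card →
      (Y1 ∪ Y2).card = (N (Y1 ∪ Y2)).card := by
    intro Y1 hY1 Y2 hY2 h1 h2
    have hNunion : N (Y1 ∪ Y2) = N Y1 ∪ N Y2 := by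
      ext v
      simp only [hNdef, Finset.mem_biUnion, Finset.mem_union]
      constructor
      · rintro ⟨u, hu | hu, hv⟩
        · exact Or.inl ⟨u, hu, hv⟩
        · exact Or.inr ⟨u, hu, hv⟩
      · rintro (⟨u, hu, hv⟩ | ⟨u, hu, hv⟩)
        · exact ⟨u, Or.inl hu, hv⟩
        · exact ⟨u, Or.inr hu, hv⟩
    have hNint : N (Y1 ∩ Y2) ⊆ N Y1 ∩ N Y2 := by
      intro v hv
      rw [Finset.mem_biUnion] at hv
      obtain ⟨u, hu, hvu⟩ := hv
      rw [Finset.mem_inter] at hu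
      exact Finset.mem_inter.mpr ⟨Finset.mem_biUnion.mpr ⟨u, hu.1, hvu⟩,
        Finset.mem_biUnion.mpr ⟨u, hu.2, hvu⟩⟩
    have hint : (Y1 ∩ Y2).card ≤ (N Y1 ∩ N Y2).card := by
      rcases (Y1 ∩ Y2).eq_empty_or_nonempty with h | h
      · simp [h]
      · exact le_trans (hHall _ (le_trans Finset.inter_subset_left hY1) h)
          (Finset.card_le_card hNint)
    have e1 : (N Y1 ∪ N Y2).card + (N Y1 ∩ N Y2).card = (N Y1).card + (N Y2).card :=
      Finset.card_union_add_card_inter _ _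
    have e2 : (Y1 ∪ Y2).card + (Y1 ∩ Y2).card = Y1.card + Y2.card :=
      Finset.card_union_add_card_inter _ _
    have hge : (Y1 ∪ Y2).card ≤ (N (Y1 ∪ Y2)).card := by
      rcases (Y1 ∪ Y2).eq_empty_or_nonempty with h | h
      · simp [h]
      · exact hHall _ (Finset.union_subset hY1 hY2) h
    rw [hNunion] at hge ⊢
    omega
  -- a maximum tight subset Y0 of X
  set T : Set ℕ := {k : ℕ | ∃ Y ⊆ X, Y.card = (N Y).card ∧ Y.card = k} with hTdef
  have hT0 : (0:ℕ) ∈ T := ⟨∅, Finset.empty_subset _, by simp [hNdef], Finset.card_empty⟩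
  have hTbdd : BddAbove T := by
    refine ⟨X.card, ?_⟩
    rintro m ⟨Y, hYX, _, rfl⟩
    exact Finset.card_le_card hYX
  have hTmem : sSup T ∈ T := Nat.sSup_mem ⟨0, hT0⟩ hTbdd
  obtain ⟨Y0, hY0X, hY0tight, hY0card⟩ := hTmem
  -- every tight subset of X is contained in Y0
  have hY0max : ∀ Y ⊆ X, Y.card = (N Y).card → Y ⊆ Y0 := by
    intro Y hYX hYt
    have htu := tight_union Y0 hY0X Y hYX hY0tight hYt
    have hmem : (Y0 ∪ Y).card ∈ T := ⟨Y0 ∪ Y, Finset.union_subset hY0X hYX, htu, rfl⟩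
    have hle := le_csSup hTbdd hmem
    rw [← hY0card] at hle
    have hsub : Y0 ⊆ Y0 ∪ Y := Finset.subset_union_left
    have := Finset.eq_of_subset_of_card_le hsub hle
    intro u hu
    rw [this]
    exact Finset.mem_union_right _ hu
  set W : Finset V := N Y0 with hWdef
  -- edges touching Y0 lie inside W
  have hedgeW : ∀ u ∈ Y0, (u.1 : Finset V) ⊆ W := by
    intro u hu
    exact Finset.subset_biUnion_of_mem (fun u => (u.1 : Finset V)) hu
  -- dichotomy for z ∈ Z \ X
  have dich : ∀ z ∈ Z, z ∉ X →
      ((z.1 : Finset V) ⊆ W ∨ (X.filter (fun u => u.1 = z.1)).card = r - 1) := by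
    intro z hzZ hzX
    by_cases hsat : (X.filter (fun u => u.1 = z.1)).card = r - 1
    · exact Or.inr hsat
    · left
      have hcap' : ∀ e : {e // e ∈ H},
          ((insert z X).filter (fun u => u.1 = e)).card ≤ r - 1 := by
        intro e
        rw [Finset.filter_insert]
        by_cases he : z.1 = e
        · rw [if_pos he]
          have hznot : z ∉ X.filter (fun u => u.1 = e) := fun h =>
            hzX (Finset.mem_of_mem_filter _ h)
          rw [Finset.card_insert_of_notMem hznot]
          have h1 := hcap e
          have h2 : (X.filter (fun u => u.1 = e)).card ≠ r - 1 := by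
            rw [← he]; exact hsat
          omega
        · rw [if_neg he]; exact hcap e
      have hnind := hmax z hzZ hzX
      rw [hIndep] at hnind
      push_neg at hnind
      obtain ⟨X', hX'sub, hX'ne, hX'card0⟩ := hnind hcap'
      have hX'card : (N X').card < X'.card := hX'card0
      have hzX' : z ∈ X' := by
        by_contra hz
        have hX'X : X' ⊆ X := by
          intro u hu
          rcases Finset.mem_insert.mp (hX'sub hu) with h | h
          · exact absurd (h ▸ hu) hz
          · exact h
        exact absurd (hHall X' hX'X hX'ne) (by omega)
      set X'' : Finset ({e // e ∈ H} × Fin b) := X'.erase z with hX''def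
      have hX''X : X'' ⊆ X := by
        intro u hu
        have hu' := Finset.mem_erase.mp hu
        rcases Finset.mem_insert.mp (hX'sub hu'.2) with h | h
        · exact absurd h hu'.1
        · exact h
      have hzsub : (z.1 : Finset V) ⊆ N X' := Finset.subset_biUnion_of_mem (fun u => (u.1 : Finset V)) hzX'
      have hrcard : r ≤ (N X').card := by
        have := Finset.card_le_card hzsub
        rwa [hunif z.1 z.1.2] at this
      have hcarderase : X''.card = X'.card - 1 := Finset.card_erase_of_mem hzX'
      have hX''ne : X''.Nonempty := by
        rw [← Finset.card_pos, hcarderase]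
        omega
      have hNsub : N X'' ⊆ N X' := by
        intro v hv
        rw [Finset.mem_biUnion] at hv
        obtain ⟨u, hu, hvu⟩ := hv
        exact Finset.mem_biUnion.mpr ⟨u, Finset.mem_of_mem_erase hu, hvu⟩
      have hHall'' : X''.card ≤ (N X'').card := hHall X'' hX''X hX''ne
      have hNcard : (N X').card ≤ (N X'').card := by
        have := Finset.card_le_card hNsub
        omega
      have hNeq : N X'' = N X' :=
        Finset.eq_of_subset_of_card_le hNsub hNcard
      have hX''tight : X''.card = (N X'').card := by
        have := Finset.card_le_card hNsub
        omega
      have hX''Y0 := hY0max X'' hX''X hX''tight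
      have : N X'' ⊆ W := by
        intro v hv
        rw [Finset.mem_biUnion] at hv
        obtain ⟨u, hu, hvu⟩ := hv
        exact Finset.mem_biUnion.mpr ⟨u, hX''Y0 hu, hvu⟩
      calc (z.1 : Finset V) ⊆ N X' := hzsub
        _ = N X'' := hNeq.symm
        _ ⊆ W := this
  -- the counting argument
  set SZ : Finset {e // e ∈ H} := Z.image Prod.fst with hSZdef
  have hfib : ∀ (Y : Finset ({e // e ∈ H} × Fin b)) (s : {e // e ∈ H}),
      (Y.filter (fun u => u.1 = s)).card ≤ b := by
    intro Y s
    have h : (Y.filter (fun u => u.1 = s)).card ≤ (Finset.univ : Finset (Fin b)).card := by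
      apply Finset.card_le_card_of_injOn Prod.snd (fun _ _ => Finset.mem_univ _)
      intro u hu v hv huv
      rw [Finset.mem_coe, Finset.mem_filter] at hu hv
      exact Prod.ext (hu.2.trans hv.2.symm) huv
    simpa using h
  have hsum : Z.card = ∑ s ∈ SZ, (Z.filter (fun u => u.1 = s)).card :=
    Finset.card_eq_sum_card_fiberwise (fun x hx => Finset.mem_image_of_mem _ hx)
  have hXYsum : (X \ Y0).card = ∑ s ∈ SZ, ((X \ Y0).filter (fun u => u.1 = s)).card :=
    Finset.card_eq_sum_card_fiberwise
      (fun x hx => Finset.mem_image_of_mem _ (hXZ (Finset.mem_sdiff.mp hx).1))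
  -- part 1 : edges inside W
  have hE1 : (SZ.filter (fun s : {e // e ∈ H} => (s : Finset V) ⊆ W)).card * b ≤ a * Y0.card := by
    have hinj : (SZ.filter (fun s : {e // e ∈ H} => (s : Finset V) ⊆ W)).card
        ≤ (H.filter (fun e => e ⊆ W)).card := by
      apply Finset.card_le_card_of_injOn Subtype.val
      · intro s hs
        rw [Finset.mem_coe, Finset.mem_filter] at hs
        rw [Finset.mem_coe, Finset.mem_filter]
        exact ⟨s.2, hs.2⟩
      · intro u hu v hv huv
        exact Subtype.ext huv
    rcases W.eq_empty_or_nonempty with hWe | hWne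
    · have hempty : SZ.filter (fun s : {e // e ∈ H} => (s : Finset V) ⊆ W) = ∅ := by
        rw [Finset.filter_eq_empty_iff]
        intro s hs hsub
        have hc : (s : Finset V).card = r := hunif s s.2
        have h0 : (s : Finset V) = ∅ := Finset.subset_empty.mp (hWe ▸ hsub)
        rw [h0, Finset.card_empty] at hc
        omega
      rw [hempty]
      simp
    · have hd := hdens W hWne
      have hYW : Y0.card = W.card := hY0tight
      calc (SZ.filter (fun s : {e // e ∈ H} => (s : Finset V) ⊆ W)).card * b
          ≤ (H.filter (fun e => e ⊆ W)).card * b := Nat.mul_le_mul_right _ hinj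
        _ ≤ a * W.card := hd
        _ = a * Y0.card := by rw [← hYW]
  -- part 2 : per-edge bound outside W
  have hE2 : ∀ s ∈ SZ.filter (fun s : {e // e ∈ H} => ¬ (s : Finset V) ⊆ W),
      (Z.filter (fun u => u.1 = s)).card ≤ a * ((X \ Y0).filter (fun u => u.1 = s)).card := by
    intro s hs
    rw [Finset.mem_filter] at hs
    obtain ⟨hsSZ, hsW⟩ := hs
    have hY0s : ∀ u ∈ Y0, u.1 ≠ s := by
      intro u hu heq
      exact hsW (heq ▸ hedgeW u hu)
    by_cases hex : ∃ z ∈ Z.filter (fun u => u.1 = s), z ∉ X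
    · obtain ⟨z, hzF, hzX⟩ := hex
      rw [Finset.mem_filter] at hzF
      obtain ⟨hzZ, hzs⟩ := hzF
      rcases dich z hzZ hzX with h | h
      · exact absurd (hzs ▸ h) hsW
      · have heq2 : (X \ Y0).filter (fun u => u.1 = s) = X.filter (fun u => u.1 = s) := by
          apply Finset.Subset.antisymm
          · exact Finset.filter_subset_filter _ Finset.sdiff_subset
          · intro u hu
            rw [Finset.mem_filter] at hu
            rw [Finset.mem_filter, Finset.mem_sdiff]
            exact ⟨⟨hu.1, fun hY => hY0s u hY hu.2⟩, hu.2⟩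
        have hcard : ((X \ Y0).filter (fun u => u.1 = s)).card = r - 1 := by
          rw [heq2, ← hzs]
          exact h
        calc (Z.filter (fun u => u.1 = s)).card ≤ b := hfib Z s
          _ ≤ a * (r - 1) := le_of_lt hab
          _ = a * ((X \ Y0).filter (fun u => u.1 = s)).card := by rw [hcard]
    · push_neg at hex
      have hsub : Z.filter (fun u => u.1 = s) ⊆ (X \ Y0).filter (fun u => u.1 = s) := by
        intro u hu
        have huX : u ∈ X := hex u hu
        rw [Finset.mem_filter] at hu
        rw [Finset.mem_filter, Finset.mem_sdiff]
        exact ⟨⟨huX, fun hY => hY0s u hY hu.2⟩, hu.2⟩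
      calc (Z.filter (fun u => u.1 = s)).card
          ≤ ((X \ Y0).filter (fun u => u.1 = s)).card := Finset.card_le_card hsub
        _ ≤ a * ((X \ Y0).filter (fun u => u.1 = s)).card := Nat.le_mul_of_pos_left _ ha
  -- assemble
  rw [← hXcard]
  have hsplit := Finset.sum_filter_add_sum_filter_not SZ (fun s : {e // e ∈ H} => (s : Finset V) ⊆ W)
      (fun s => (Z.filter (fun u => u.1 = s)).card)
  have hb1 : ∑ s ∈ SZ.filter (fun s : {e // e ∈ H} => (s : Finset V) ⊆ W),
      (Z.filter (fun u => u.1 = s)).card ≤ a * Y0.card := by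
    calc ∑ s ∈ SZ.filter (fun s : {e // e ∈ H} => (s : Finset V) ⊆ W), (Z.filter (fun u => u.1 = s)).card
        ≤ ∑ _s ∈ SZ.filter (fun s : {e // e ∈ H} => (s : Finset V) ⊆ W), b :=
          Finset.sum_le_sum (fun s _ => hfib Z s)
      _ = (SZ.filter (fun s : {e // e ∈ H} => (s : Finset V) ⊆ W)).card * b := by
          rw [Finset.sum_const, smul_eq_mul]
      _ ≤ a * Y0.card := hE1
  have hb2 : ∑ s ∈ SZ.filter (fun s : {e // e ∈ H} => ¬ (s : Finset V) ⊆ W),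
      (Z.filter (fun u => u.1 = s)).card ≤ a * (X \ Y0).card := by
    calc ∑ s ∈ SZ.filter (fun s : {e // e ∈ H} => ¬ (s : Finset V) ⊆ W), (Z.filter (fun u => u.1 = s)).card
        ≤ ∑ s ∈ SZ.filter (fun s : {e // e ∈ H} => ¬ (s : Finset V) ⊆ W),
            a * ((X \ Y0).filter (fun u => u.1 = s)).card := Finset.sum_le_sum hE2
      _ ≤ ∑ s ∈ SZ, a * ((X \ Y0).filter (fun u => u.1 = s)).card :=
          Finset.sum_le_sum_of_subset (Finset.filter_subset _ _)
      _ = a * ∑ s ∈ SZ, ((X \ Y0).filter (fun u => u.1 = s)).card := by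
          rw [Finset.mul_sum]
      _ = a * (X \ Y0).card := by rw [← hXYsum]
  have hcards : (X \ Y0).card + Y0.card = X.card := Finset.card_sdiff_add_card_eq_card hY0X
  calc Z.card = ∑ s ∈ SZ, (Z.filter (fun u => u.1 = s)).card := hsum
    _ = ∑ s ∈ SZ.filter (fun s : {e // e ∈ H} => (s : Finset V) ⊆ W), (Z.filter (fun u => u.1 = s)).card
        + ∑ s ∈ SZ.filter (fun s : {e // e ∈ H} => ¬ (s : Finset V) ⊆ W), (Z.filter (fun u => u.1 = s)).card :=
        hsplit.symm
    _ ≤ a * Y0.card + a * (X \ Y0).card := Nat.add_le_add hb1 hb2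
    _ = a * X.card := by rw [← Nat.left_distrib]; congr 1; omega
end
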